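/- arXiv:2403.07633 — 7 statements merged into one kernel-verified Lean document; each statement's English description precedes it below -/
import Mathlib

section
/- For every integer i ≥ 1, the kernel k_i(x, y) = (i+1)(1−x)^i Σ_{j=0}^∞ binom(i+j+1, j) x^j · 1_{[j/(i+j), (j+1)/(i+j+1))}(y) is doubly stochastic with respect to Lebesgue measure on [0,1): ∫_0^1 k_i(x, y) dy = 1 for every x ∈ [0,1) and ∫_0^1 k_i(x, y) dx = 1 for every y ∈ [0,1). In particular, the normalized Lebesgue measure λ on [0,1] is T̂_i-invariant: T̂_i'λ = λ. -/
open MeasureTheory Filter Set Topology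

/-- The generalized Kantorovich operator `T̂_i` acting on functions `ℝ → ℝ`
(representing continuous functions on `[0,1]`). -/
noncomputable def kantOp (i : ℕ) (f : ℝ → ℝ) : ℝ → ℝ := fun x =>
  if x = 1 then f 1
  else ((i : ℝ) + 1) * (1 - x) ^ i *
    ∑' j : ℕ, (Nat.choose (i + j + 1) j : ℝ) * x ^ j *
      ∫ t in ((j : ℝ) / ((i : ℝ) + j))..(((j : ℝ) + 1) / ((i : ℝ) + (j : ℝ) + 1)), f t

/-- The transition density `k_i(x,y)` of `T̂_i` with respect to Lebesgue measure on `[0,1)`. -/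
noncomputable def kantKernel (i : ℕ) (x y : ℝ) : ℝ :=
  ((i : ℝ) + 1) * (1 - x) ^ i *
    ∑' j : ℕ, (Nat.choose (i + j + 1) j : ℝ) * x ^ j *
      Set.indicator (Set.Ico ((j : ℝ) / ((i : ℝ) + j)) (((j : ℝ) + 1) / ((i : ℝ) + (j : ℝ) + 1)))
        (fun _ => (1 : ℝ)) y

namespace Kant


noncomputable def pt (i j : ℕ) : ℝ := (j : ℝ) / ((i : ℝ) + j)

variable {i : ℕ}

lemma cast_pos (hi : 1 ≤ i) (j : ℕ) : (0:ℝ) < (i:ℝ) + j := by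
  have h : (1:ℝ) ≤ (i:ℝ) := by exact_mod_cast hi
  have hj : (0:ℝ) ≤ (j:ℝ) := Nat.cast_nonneg j
  linarith

lemma pt_zero : pt i 0 = 0 := by simp [pt]

lemma pt_nonneg (hi : 1 ≤ i) (j : ℕ) : 0 ≤ pt i j :=
  div_nonneg (Nat.cast_nonneg j) (cast_pos hi j).le

lemma pt_lt_one (hi : 1 ≤ i) (j : ℕ) : pt i j < 1 := by
  rw [pt, div_lt_one (cast_pos hi j)]
  have h : (1:ℝ) ≤ (i:ℝ) := by exact_mod_cast hi
  linarith

lemma pt_succ (j : ℕ) : pt i (j+1) = ((j:ℝ)+1)/((i:ℝ)+(j:ℝ)+1) := by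
  rw [pt]; push_cast; ring_nf

lemma pt_strictMono (hi : 1 ≤ i) : StrictMono (pt i) := by
  apply strictMono_nat_of_lt_succ
  intro j
  have h1 := cast_pos hi j
  have h2 : (0:ℝ) < (i:ℝ)+(j:ℝ)+1 := by linarith
  have h : (1:ℝ) ≤ (i:ℝ) := by exact_mod_cast hi
  have hj : (0:ℝ) ≤ (j:ℝ) := Nat.cast_nonneg j
  rw [pt, pt_succ, div_lt_div_iff₀ h1 h2]
  nlinarith

lemma pt_tendsto (hi : 1 ≤ i) : Tendsto (pt i) atTop (𝓝 1) := by
  have := tendsto_natCast_div_add_atTop (𝕜 := ℝ) (i : ℝ)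
  exact (by simpa [add_comm] using this : Tendsto (fun n : ℕ => (n:ℝ) / ((i:ℝ) + n)) atTop (𝓝 1))

lemma pt_len (hi : 1 ≤ i) (j : ℕ) :
    pt i (j+1) - pt i j = (i:ℝ) / (((i:ℝ)+(j:ℝ)) * ((i:ℝ)+(j:ℝ)+1)) := by
  have h1 := (cast_pos hi j).ne'
  have h2 : ((i:ℝ)+(j:ℝ)+1) ≠ 0 := by have := cast_pos hi j; linarith
  rw [pt_succ, pt]
  field_simp
  ring



lemma hasSum_choose : ∀ (i : ℕ) {x : ℝ}, 0 ≤ x → x < 1 →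
    HasSum (fun j : ℕ => (Nat.choose (i + j) j : ℝ) * x ^ j) (((1 - x) ^ (i + 1))⁻¹) := by
  intro i
  induction i with
  | zero =>
    intro x h0 h1
    simpa using hasSum_geometric_of_lt_one h0 h1
  | succ n ih =>
    intro x h0 h1
    have hf := ih h0 h1
    have hg := hasSum_geometric_of_lt_one h0 h1
    have hf' : Summable fun j : ℕ => ‖(Nat.choose (n + j) j : ℝ) * x ^ j‖ := by
      refine hf.summable.congr fun j => ?_
      rw [Real.norm_eq_abs, abs_of_nonneg (by positivity)]
    have hg' : Summable fun j : ℕ => ‖x ^ j‖ := by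
      refine hg.summable.congr fun j => ?_
      rw [Real.norm_eq_abs, abs_of_nonneg (by positivity)]
    have key := hasSum_sum_range_mul_of_summable_norm hf' hg'
    rw [hf.tsum_eq, hg.tsum_eq] at key
    have hval : ((1-x)^(n+1))⁻¹ * (1-x)⁻¹ = ((1-x)^(n+1+1))⁻¹ := by
      rw [← mul_inv, ← pow_succ]
    rw [hval] at key
    have hfun : (fun N : ℕ => ∑ k ∈ Finset.range (N+1),
        ((Nat.choose (n+k) k : ℝ) * x^k) * x^(N-k))
        = fun N : ℕ => (Nat.choose (n+1+N) N : ℝ) * x^N := by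
      funext N
      have : ∀ k ∈ Finset.range (N+1),
          ((Nat.choose (n+k) k : ℝ) * x^k) * x^(N-k) = (Nat.choose (n+k) k : ℝ) * x^N := by
        intro k hk
        rw [Finset.mem_range] at hk
        rw [mul_assoc, ← pow_add, Nat.add_sub_cancel' (by omega)]
      rw [Finset.sum_congr rfl this, ← Finset.sum_mul, ← Nat.cast_sum]
      congr 2
      have : ∀ k, (n+k).choose k = (k+n).choose n := fun k => by
        rw [Nat.add_comm, Nat.choose_symm_add]
      simp_rw [this]
      rw [Nat.sum_range_add_choose N n]
      rw [show N + n + 1 = (n+1) + N by omega, Nat.choose_symm_add]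
    rw [hfun] at key
    exact key

lemma beta_nat (j k : ℕ) :
    ∫ x in (0:ℝ)..1, x ^ j * (1 - x) ^ k
      = (Nat.factorial j * Nat.factorial k : ℝ) / (Nat.factorial (j + k + 1)) := by
  have hu : 0 < Complex.re ((j:ℂ)+1) := by
    simp [Complex.add_re, Complex.natCast_re]
    positivity
  have h := Complex.betaIntegral_eval_nat_add_one_right hu k
  rw [Complex.betaIntegral] at h
  have hL : (∫ x : ℝ in (0:ℝ)..1, (x : ℂ) ^ ((j:ℂ)+1-1) * (1 - (x:ℂ)) ^ ((k:ℂ)+1-1))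
      = ((∫ x in (0:ℝ)..1, x ^ j * (1 - x) ^ k : ℝ) : ℂ) := by
    rw [← intervalIntegral.integral_ofReal]
    refine intervalIntegral.integral_congr fun x _ => ?_
    push_cast
    rw [show (j:ℂ)+1-1 = (j:ℕ) by push_cast; ring, show (k:ℂ)+1-1 = (k:ℕ) by push_cast; ring,
      Complex.cpow_natCast, Complex.cpow_natCast]
  rw [hL] at h
  have hprod : (∏ m ∈ Finset.range (k+1), ((j:ℂ) + 1 + m))
      = ((Nat.factorial (j+k+1) : ℂ) / (Nat.factorial j : ℂ)) := by
    have hnat : ∀ K, (Nat.factorial j) * (∏ m ∈ Finset.range K, (j + 1 + m)) = Nat.factorial (j+K) := by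
      intro K
      induction K with
      | zero => simp
      | succ K ihK =>
        rw [Finset.prod_range_succ, ← Nat.mul_assoc, ihK,
          show j + (K+1) = (j+K) + 1 by omega, Nat.factorial_succ]
        ring
    have hnat := hnat (k+1)
    rw [show j + (k+1) = j + k + 1 by omega] at hnat
    have : ((Nat.factorial j : ℂ)) * (∏ m ∈ Finset.range (k+1), ((j:ℂ) + 1 + m))
        = (Nat.factorial (j+k+1) : ℂ) := by
      rw [← hnat]
      push_cast
      ring
    have hj : (Nat.factorial j : ℂ) ≠ 0 := by exact_mod_cast Nat.factorial_ne_zero j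
    rw [eq_div_iff hj]
    linear_combination this
  rw [hprod] at h
  have hinj : ((∫ x in (0:ℝ)..1, x ^ j * (1 - x) ^ k : ℝ) : ℂ)
      = (((Nat.factorial j * Nat.factorial k : ℝ) / (Nat.factorial (j + k + 1)) : ℝ) : ℂ) := by
    rw [h]
    have hj : (Nat.factorial j : ℂ) ≠ 0 := by exact_mod_cast Nat.factorial_ne_zero j
    have hjk : (Nat.factorial (j+k+1) : ℂ) ≠ 0 := by exact_mod_cast Nat.factorial_ne_zero (j+k+1)
    push_cast
    field_simp
  exact_mod_cast hinj



lemma choose_mul_len (m j : ℕ) :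
    (Nat.choose (m+1+j+1) j : ℝ) * (((m:ℝ)+1) / ((((m:ℝ)+1)+(j:ℝ)) * (((m:ℝ)+1)+(j:ℝ)+1)))
      = (Nat.choose (m+j) j : ℝ) / ((m:ℝ)+2) := by
  have c1 : ((m+1+j+1).choose j : ℝ)
      = (Nat.factorial (m+j+2) : ℝ) / (Nat.factorial j * Nat.factorial (m+2)) := by
    rw [Nat.cast_choose ℝ (show j ≤ m+1+j+1 by omega),
      show m+1+j+1 - j = m+2 by omega, show m+1+j+1 = m+j+2 by omega]
  have c2 : ((m+j).choose j : ℝ)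
      = (Nat.factorial (m+j) : ℝ) / (Nat.factorial j * Nat.factorial m) := by
    rw [Nat.cast_choose ℝ (show j ≤ m+j by omega), show m+j - j = m by omega]
  have f1 : (Nat.factorial (m+j+2) : ℝ)
      = ((m:ℝ)+(j:ℝ)+2) * (((m:ℝ)+(j:ℝ)+1) * (Nat.factorial (m+j) : ℝ)) := by
    rw [show m+j+2 = (m+j+1)+1 by omega, Nat.factorial_succ, Nat.factorial_succ]
    push_cast; ring
  have f2 : (Nat.factorial (m+2) : ℝ)
      = ((m:ℝ)+2) * (((m:ℝ)+1) * (Nat.factorial m : ℝ)) := by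
    rw [show m+2 = (m+1)+1 by omega, Nat.factorial_succ, Nat.factorial_succ]
    push_cast; ring
  have hj : (0:ℝ) ≤ (j:ℝ) := Nat.cast_nonneg j
  have hm : (0:ℝ) ≤ (m:ℝ) := Nat.cast_nonneg m
  have d1 : ((m:ℝ)+1)+(j:ℝ) ≠ 0 := by linarith
  have d2 : ((m:ℝ)+1)+(j:ℝ)+1 ≠ 0 := by linarith
  have d3 : ((m:ℝ)+2) ≠ 0 := by linarith
  have d4 : (Nat.factorial j : ℝ) ≠ 0 := by exact_mod_cast Nat.factorial_ne_zero j
  have d5 : (Nat.factorial m : ℝ) ≠ 0 := by exact_mod_cast Nat.factorial_ne_zero m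
  have d6 : (Nat.factorial (m+j) : ℝ) ≠ 0 := by exact_mod_cast Nat.factorial_ne_zero (m+j)
  rw [c1, c2, f1, f2]
  field_simp
  ring

lemma choose_beta (i J : ℕ) :
    (((i:ℝ)+1) * (Nat.choose (i+J+1) J : ℝ))
      * ((Nat.factorial J * Nat.factorial i : ℝ) / (Nat.factorial (J+i+1))) = 1 := by
  have h := Nat.choose_mul_factorial_mul_factorial (show J ≤ i+J+1 by omega)
  rw [show i+J+1-J = i+1 by omega] at h
  have hc : ((i+J+1).choose J : ℝ) * (Nat.factorial J : ℝ) * (Nat.factorial (i+1) : ℝ)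
      = (Nat.factorial (i+J+1) : ℝ) := by exact_mod_cast congrArg (Nat.cast : ℕ → ℝ) h
  rw [Nat.factorial_succ] at hc
  rw [show J+i+1 = i+J+1 by omega]
  have h1 : (Nat.factorial (i+J+1) : ℝ) ≠ 0 := by
    exact_mod_cast Nat.factorial_ne_zero (i+J+1)
  field_simp
  push_cast at hc ⊢
  nlinarith [hc]


lemma kantKernel_eq (i : ℕ) (x y : ℝ) :
    kantKernel i x y = ((i:ℝ)+1) * (1-x)^i *
      ∑' j : ℕ, (Nat.choose (i+j+1) j : ℝ) * x^j *
        (Ico (pt i j) (pt i (j+1))).indicator (fun _ => (1:ℝ)) y := by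
  simp only [kantKernel, pt]
  congr 1
  refine tsum_congr fun j => ?_
  have h2 : ((i:ℝ) + ((j+1:ℕ):ℝ)) = (i:ℝ)+(j:ℝ)+1 := by push_cast; ring
  have h1 : ((j+1 : ℕ) : ℝ) = (j:ℝ)+1 := by push_cast; ring
  rw [h2, h1]

lemma integral_w (i J : ℕ) :
    ∫ x in Ico (0:ℝ) 1, (((i:ℝ)+1) * (1-x)^i * ((Nat.choose (i+J+1) J : ℝ) * x^J)) = 1 := by
  have h1 : ∫ x in Ico (0:ℝ) 1, (((i:ℝ)+1) * (1-x)^i * ((Nat.choose (i+J+1) J : ℝ) * x^J))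
      = ∫ x in (0:ℝ)..1, (((i:ℝ)+1) * (1-x)^i * ((Nat.choose (i+J+1) J : ℝ) * x^J)) := by
    rw [intervalIntegral.integral_of_le zero_le_one, integral_Ico_eq_integral_Ioo,
      integral_Ioc_eq_integral_Ioo]
  rw [h1]
  have h2 : ∀ x : ℝ, ((i:ℝ)+1) * (1-x)^i * ((Nat.choose (i+J+1) J : ℝ) * x^J)
      = (((i:ℝ)+1) * (Nat.choose (i+J+1) J : ℝ)) * (x^J * (1-x)^i) := fun x => by ring
  simp only [h2]
  rw [intervalIntegral.integral_const_mul, beta_nat]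
  exact choose_beta i J

lemma hsub (i : ℕ) (hi : 1 ≤ i) (j : ℕ) :
    Ico (pt i j) (pt i (j+1)) ⊆ Ico (0:ℝ) 1 := fun y hy =>
  ⟨le_trans (pt_nonneg hi j) hy.1, lt_trans hy.2 (pt_lt_one hi (j+1))⟩

lemma integral_piece (i : ℕ) (hi : 1 ≤ i) (c : ℝ) (j : ℕ) :
    ∫ y in Ico (0:ℝ) 1, c * (Ico (pt i j) (pt i (j+1))).indicator (fun _ => (1:ℝ)) y
      = c * (pt i (j+1) - pt i j) := by
  rw [integral_const_mul, MeasureTheory.integral_indicator measurableSet_Ico]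
  rw [setIntegral_const, measureReal_def, Measure.restrict_apply measurableSet_Ico,
    Set.inter_eq_left.mpr (hsub i hi j), Real.volume_Ico,
    ENNReal.toReal_ofReal (by linarith [(pt_strictMono hi).monotone (Nat.le_succ j)] : (0:ℝ) ≤ pt i (j+1) - pt i j)]
  rw [smul_eq_mul, mul_one]

lemma integrable_piece (i : ℕ) (hi : 1 ≤ i) (c : ℝ) (j : ℕ) :
    Integrable (fun y => c * (Ico (pt i j) (pt i (j+1))).indicator (fun _ => (1:ℝ)) y)
      (volume.restrict (Ico (0:ℝ) 1)) := by
  apply Integrable.const_mul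
  rw [integrable_indicator_iff measurableSet_Ico]
  apply (integrableOn_const_iff (C := (1:ℝ))).mpr
  right
  refine lt_of_le_of_lt (Measure.restrict_apply_le _ _) ?_
  rw [Real.volume_Ico]
  exact ENNReal.ofReal_lt_top

lemma part1 (i : ℕ) (hi : 1 ≤ i) :
    ∀ x ∈ Set.Ico (0:ℝ) 1, (∫ y in Set.Ico (0:ℝ) 1, kantKernel i x y) = 1 := by
  obtain ⟨m, rfl⟩ : ∃ m, i = m + 1 := ⟨i - 1, by omega⟩
  intro x hx
  obtain ⟨hx0, hx1⟩ := hx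
  have hnn : ∀ (j : ℕ) (y : ℝ),
      0 ≤ (Nat.choose (m+1+j+1) j : ℝ) * x^j
        * (Ico (pt (m+1) j) (pt (m+1) (j+1))).indicator (fun _ => (1:ℝ)) y := fun j y =>
    mul_nonneg (mul_nonneg (Nat.cast_nonneg _) (pow_nonneg hx0 j))
      (Set.indicator_nonneg (fun _ _ => zero_le_one) y)
  have hteq : ∀ j : ℕ, (Nat.choose (m+1+j+1) j : ℝ) * x^j * (pt (m+1) (j+1) - pt (m+1) j)
      = ((Nat.choose (m+j) j : ℝ) * x^j) / ((m:ℝ)+2) := by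
    intro j
    rw [pt_len hi j]
    push_cast
    linear_combination x^j * choose_mul_len m j
  have hintu : ∀ j : ℕ, (∫ y in Ico (0:ℝ) 1, (Nat.choose (m+1+j+1) j : ℝ) * x^j
        * (Ico (pt (m+1) j) (pt (m+1) (j+1))).indicator (fun _ => (1:ℝ)) y)
      = ((Nat.choose (m+j) j : ℝ) * x^j) / ((m:ℝ)+2) := fun j => by
    rw [integral_piece (m+1) hi _ j, hteq j]
  have hsummable : Summable (fun j : ℕ => (Nat.choose (m+j) j : ℝ) * x^j / ((m:ℝ)+2)) :=
    (hasSum_choose m hx0 hx1).summable.div_const _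
  have hlin : ∀ j : ℕ, (∫⁻ y in Ico (0:ℝ) 1, ‖(Nat.choose (m+1+j+1) j : ℝ) * x^j
        * (Ico (pt (m+1) j) (pt (m+1) (j+1))).indicator (fun _ => (1:ℝ)) y‖ₑ)
      = ENNReal.ofReal ((Nat.choose (m+j) j : ℝ) * x^j / ((m:ℝ)+2)) := by
    intro j
    rw [lintegral_congr (fun y => Real.enorm_eq_ofReal (hnn j y)),
      ← ofReal_integral_eq_lintegral_ofReal (integrable_piece (m+1) hi _ j)
        (Eventually.of_forall (hnn j)), hintu j]
  simp only [kantKernel_eq]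
  rw [integral_const_mul]
  rw [MeasureTheory.integral_tsum
    (fun j => ((measurable_const.indicator measurableSet_Ico).const_mul _).aestronglyMeasurable)
    (by
      simp only [hlin]
      rw [← ENNReal.ofReal_tsum_of_nonneg (fun j => by positivity) hsummable]
      exact ENNReal.ofReal_ne_top)]
  simp only [hintu]
  rw [tsum_div_const, (hasSum_choose m hx0 hx1).tsum_eq]
  have hne : (1:ℝ)-x ≠ 0 := by linarith
  have hm2 : ((m:ℝ)+2) ≠ 0 := by positivity
  push_cast
  field_simp
  ring

lemma part2 (i : ℕ) (hi : 1 ≤ i) :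
    ∀ y ∈ Set.Ico (0:ℝ) 1, (∫ x in Set.Ico (0:ℝ) 1, kantKernel i x y) = 1 := by
  intro y hy
  obtain ⟨hy0, hy1⟩ := hy
  have hex : ∃ n, y < pt i (n+1) := by
    obtain ⟨n, hn⟩ := ((pt_tendsto hi).eventually (eventually_gt_nhds hy1)).exists
    exact ⟨n, lt_of_lt_of_le hn ((pt_strictMono hi).monotone (Nat.le_succ n))⟩
  obtain ⟨J, hJ2, hJmin⟩ : ∃ J, y < pt i (J+1) ∧ ∀ m, m < J → ¬ (y < pt i (m+1)) :=
    ⟨Nat.find hex, Nat.find_spec hex, fun m hm => Nat.find_min hex hm⟩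
  have hJ1 : pt i J ≤ y := by
    cases J with
    | zero => rw [pt_zero]; exact hy0
    | succ K => exact not_lt.mp (hJmin K (Nat.lt_succ_self K))
  have hind : ∀ j, j ≠ J → (Ico (pt i j) (pt i (j+1))).indicator (fun _ => (1:ℝ)) y = 0 := by
    intro j hj
    apply Set.indicator_of_notMem
    intro hmem
    rcases lt_or_gt_of_ne hj with h | h
    · exact absurd hmem.2
        (not_lt.mpr (le_trans ((pt_strictMono hi).monotone (by omega : j+1 ≤ J)) hJ1))
    · exact absurd hmem.1
        (not_le.mpr (lt_of_lt_of_le hJ2 ((pt_strictMono hi).monotone (by omega : J+1 ≤ j))))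
  have hker : ∀ x : ℝ, kantKernel i x y
      = ((i:ℝ)+1) * (1-x)^i * ((Nat.choose (i+J+1) J : ℝ) * x^J) := by
    intro x
    rw [kantKernel_eq]
    congr 1
    rw [tsum_eq_single J (fun j hj => by rw [hind j hj, mul_zero])]
    rw [Set.indicator_of_mem (Set.mem_Ico.mpr ⟨hJ1, hJ2⟩) (fun _ => (1:ℝ)), mul_one]
  simp only [hker]
  exact integral_w i J

lemma part3 (i : ℕ) (hi : 1 ≤ i) :
    ∀ f : ℝ → ℝ, ContinuousOn f (Set.Icc 0 1) →
      (∫ x in Set.Icc (0:ℝ) 1, kantOp i f x) = ∫ x in Set.Icc (0:ℝ) 1, f x := by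
  intro f hf
  obtain ⟨M, hM⟩ := isCompact_Icc.exists_bound_of_continuousOn hf
  have hM0 : 0 ≤ M := le_trans (norm_nonneg (f 0)) (hM 0 ⟨le_refl 0, zero_le_one⟩)
  have hfint : IntegrableOn f (Icc (0:ℝ) 1) := hf.integrableOn_Icc
  have hle : ∀ j : ℕ, pt i j ≤ pt i (j+1) := fun j => ((pt_strictMono hi) (Nat.lt_succ_self j)).le
  have hFb : ∀ j : ℕ, |∫ t in pt i j..pt i (j+1), f t| ≤ M * (pt i (j+1) - pt i j) := by
    intro j
    have hsb : ∀ t ∈ Set.uIoc (pt i j) (pt i (j+1)), ‖f t‖ ≤ M := by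
      intro t ht
      rw [Set.uIoc_of_le (hle j)] at ht
      exact hM t ⟨le_trans (pt_nonneg hi j) ht.1.le, le_trans ht.2 (pt_lt_one hi (j+1)).le⟩
    have h := intervalIntegral.norm_integral_le_of_norm_le_const hsb
    rwa [abs_of_nonneg (by linarith [hle j] : (0:ℝ) ≤ pt i (j+1) - pt i j)] at h
  have hl_sum : Summable (fun j : ℕ => pt i (j+1) - pt i j) := by
    apply summable_of_sum_range_le (c := 1) (fun j => by linarith [hle j])
    intro n
    rw [Finset.sum_range_sub (pt i)]
    have h1 := pt_lt_one hi n
    have h2 := pt_nonneg hi 0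
    linarith
  have hvint : ∀ j : ℕ, (∫ x in Ico (0:ℝ) 1,
        (((i:ℝ)+1) * (1-x)^i * ((Nat.choose (i+j+1) j : ℝ) * x^j
          * (∫ t in pt i j..pt i (j+1), f t))))
      = ∫ t in pt i j..pt i (j+1), f t := by
    intro j
    have h : ∀ x:ℝ, ((i:ℝ)+1) * (1-x)^i * ((Nat.choose (i+j+1) j : ℝ) * x^j
          * (∫ t in pt i j..pt i (j+1), f t))
        = (((i:ℝ)+1) * (1-x)^i * ((Nat.choose (i+j+1) j : ℝ) * x^j))
          * (∫ t in pt i j..pt i (j+1), f t) := fun x => by ring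
    simp only [h]
    rw [integral_mul_const, integral_w i j, one_mul]
  have hw_nn : ∀ (j : ℕ), ∀ x ∈ Ico (0:ℝ) 1,
      0 ≤ ((i:ℝ)+1) * (1-x)^i * ((Nat.choose (i+j+1) j : ℝ) * x^j) := by
    intro j x hx
    have h1 : (0:ℝ) ≤ 1 - x := by linarith [hx.2]
    have h2 := hx.1
    positivity
  have hw_int : ∀ (j : ℕ) (K : ℝ), Integrable
      (fun x : ℝ => (((i:ℝ)+1) * (1-x)^i * ((Nat.choose (i+j+1) j : ℝ) * x^j)) * K)
      (volume.restrict (Ico (0:ℝ) 1)) := by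
    intro j K
    have hc : Continuous (fun x : ℝ => (((i:ℝ)+1) * (1-x)^i * ((Nat.choose (i+j+1) j : ℝ) * x^j)) * K) :=
      ((continuous_const.mul ((continuous_const.sub continuous_id).pow i)).mul
        (continuous_const.mul (continuous_pow j))).mul continuous_const
    exact (hc.continuousOn.integrableOn_Icc).mono_set Ico_subset_Icc_self
  have hlin3 : ∀ j : ℕ, (∫⁻ x in Ico (0:ℝ) 1,
        ‖((i:ℝ)+1) * (1-x)^i * ((Nat.choose (i+j+1) j : ℝ) * x^j
          * (∫ t in pt i j..pt i (j+1), f t))‖ₑ)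
      ≤ ENNReal.ofReal (M * (pt i (j+1) - pt i j)) := by
    intro j
    calc ∫⁻ x in Ico (0:ℝ) 1,
        ‖((i:ℝ)+1) * (1-x)^i * ((Nat.choose (i+j+1) j : ℝ) * x^j
          * (∫ t in pt i j..pt i (j+1), f t))‖ₑ
        ≤ ∫⁻ x in Ico (0:ℝ) 1, ENNReal.ofReal
            ((((i:ℝ)+1) * (1-x)^i * ((Nat.choose (i+j+1) j : ℝ) * x^j))
              * (M * (pt i (j+1) - pt i j))) := by
          refine setLIntegral_mono' measurableSet_Ico fun x hx => ?_
          rw [Real.enorm_eq_ofReal_abs]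
          apply ENNReal.ofReal_le_ofReal
          have habs : |((i:ℝ)+1) * (1-x)^i * ((Nat.choose (i+j+1) j : ℝ) * x^j
                * (∫ t in pt i j..pt i (j+1), f t))|
              = (((i:ℝ)+1) * (1-x)^i * ((Nat.choose (i+j+1) j : ℝ) * x^j))
                * |∫ t in pt i j..pt i (j+1), f t| := by
            rw [show ((i:ℝ)+1) * (1-x)^i * ((Nat.choose (i+j+1) j : ℝ) * x^j
                  * (∫ t in pt i j..pt i (j+1), f t))
                = (((i:ℝ)+1) * (1-x)^i * ((Nat.choose (i+j+1) j : ℝ) * x^j))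
                  * (∫ t in pt i j..pt i (j+1), f t) from by ring, abs_mul,
              abs_of_nonneg (hw_nn j x hx)]
          rw [habs]
          exact mul_le_mul_of_nonneg_left (hFb j) (hw_nn j x hx)
      _ = ENNReal.ofReal (M * (pt i (j+1) - pt i j)) := by
          rw [← ofReal_integral_eq_lintegral_ofReal (hw_int j _)
            ((ae_restrict_iff' measurableSet_Ico).mpr (Eventually.of_forall fun x hx =>
              mul_nonneg (hw_nn j x hx)
                (mul_nonneg hM0 (by linarith [hle j] : (0:ℝ) ≤ pt i (j+1) - pt i j))))]
          rw [integral_mul_const, integral_w i j, one_mul]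
  -- sum of lintegrals is finite
  have hcond : (∑' j : ℕ, ∫⁻ x in Ico (0:ℝ) 1,
        ‖((i:ℝ)+1) * (1-x)^i * ((Nat.choose (i+j+1) j : ℝ) * x^j
          * (∫ t in pt i j..pt i (j+1), f t))‖ₑ) ≠ ⊤ := by
    refine ne_top_of_le_ne_top ?_ (ENNReal.tsum_le_tsum hlin3)
    rw [← ENNReal.ofReal_tsum_of_nonneg
      (fun j => mul_nonneg hM0 (by linarith [hle j] : (0:ℝ) ≤ pt i (j+1) - pt i j))
      (hl_sum.mul_left M)]
    exact ENNReal.ofReal_ne_top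
  -- rewrite the integral
  have hpart : ∫ x in Icc (0:ℝ) 1, kantOp i f x
      = ∑' j : ℕ, ∫ t in pt i j..pt i (j+1), f t := by
    rw [integral_Icc_eq_integral_Ico]
    have hcong : EqOn (kantOp i f) (fun x => ∑' j : ℕ,
        (((i:ℝ)+1) * (1-x)^i * ((Nat.choose (i+j+1) j : ℝ) * x^j
          * (∫ t in pt i j..pt i (j+1), f t)))) (Ico (0:ℝ) 1) := by
      intro x hx
      have hx1 : x ≠ 1 := ne_of_lt hx.2
      simp only [kantOp]
      rw [if_neg hx1, ← tsum_mul_left]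
      refine tsum_congr fun j => ?_
      rw [pt_succ, pt]
    rw [setIntegral_congr_fun measurableSet_Ico hcong]
    rw [MeasureTheory.integral_tsum (fun j => by
        have hc : Continuous (fun x : ℝ => ((i:ℝ)+1) * (1-x)^i
            * ((Nat.choose (i+j+1) j : ℝ) * x^j * (∫ t in pt i j..pt i (j+1), f t))) :=
          (continuous_const.mul ((continuous_const.sub continuous_id).pow i)).mul
            ((continuous_const.mul (continuous_pow j)).mul continuous_const)
        exact hc.aestronglyMeasurable) hcond]
    exact tsum_congr hvint
  rw [hpart]
  -- partition identity
  have hFIoc : ∀ j : ℕ, (∫ t in pt i j..pt i (j+1), f t)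
      = ∫ t in Ioc (pt i j) (pt i (j+1)), f t := fun j =>
    intervalIntegral.integral_of_le (hle j)
  have huni : (⋃ j : ℕ, Ioc (pt i j) (pt i (j+1))) = Ioo (0:ℝ) 1 := by
    ext z
    simp only [mem_iUnion, mem_Ioc, mem_Ioo]
    constructor
    · rintro ⟨j, h1, h2⟩
      exact ⟨lt_of_le_of_lt (pt_nonneg hi j) h1, lt_of_le_of_lt h2 (pt_lt_one hi (j+1))⟩
    · rintro ⟨h0, h1⟩
      have hex : ∃ n, z ≤ pt i (n+1) := by
        obtain ⟨n, hn⟩ := ((pt_tendsto hi).eventually (eventually_gt_nhds h1)).exists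
        exact ⟨n, le_trans hn.le ((pt_strictMono hi).monotone (Nat.le_succ n))⟩
      refine ⟨Nat.find hex, ?_, Nat.find_spec hex⟩
      rcases Nat.eq_zero_or_pos (Nat.find hex) with h | h
      · rw [h, pt_zero]; exact h0
      · obtain ⟨K, hK⟩ := Nat.exists_eq_succ_of_ne_zero (Nat.pos_iff_ne_zero.mp h)
        have hmin := Nat.find_min hex (show K < Nat.find hex by omega)
        rw [hK]
        push_neg at hmin
        simpa using hmin
  have hdisj : Pairwise (Function.onFun Disjoint (fun j : ℕ => Ioc (pt i j) (pt i (j+1)))) := by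
    intro j k hjk
    rcases lt_or_gt_of_ne hjk with h | h
    · refine Set.Ioc_disjoint_Ioc.mpr ?_
      exact le_trans (min_le_left _ _)
        (le_trans ((pt_strictMono hi).monotone (by omega : j+1 ≤ k)) (le_max_right _ _))
    · refine Set.Ioc_disjoint_Ioc.mpr ?_
      exact le_trans (min_le_right _ _)
        (le_trans ((pt_strictMono hi).monotone (by omega : k+1 ≤ j)) (le_max_left _ _))
  have hintun : IntegrableOn f (⋃ j : ℕ, Ioc (pt i j) (pt i (j+1))) := by
    refine hfint.mono_set ?_
    rw [huni]
    exact Ioo_subset_Icc_self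
  simp only [hFIoc]
  rw [← MeasureTheory.integral_iUnion (fun j => measurableSet_Ioc) hdisj hintun, huni,
    integral_Icc_eq_integral_Ico, integral_Ico_eq_integral_Ioo]

end Kant

/-- The kernel `k_i` is doubly stochastic with respect to Lebesgue measure on `[0,1)`:
both marginals integrate to `1`. In particular, the (normalized) Lebesgue measure `λ` on
`[0,1]` is `T̂_i`-invariant, i.e. `⟨T̂_i f, λ⟩ = ⟨f, λ⟩` for all `f ∈ C([0,1])`. -/
theorem kantorovich_kernel_doubly_stochastic (i : ℕ) (hi : 1 ≤ i) :
    (∀ x ∈ Set.Ico (0:ℝ) 1, (∫ y in Set.Ico (0:ℝ) 1, kantKernel i x y) = 1) ∧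
    (∀ y ∈ Set.Ico (0:ℝ) 1, (∫ x in Set.Ico (0:ℝ) 1, kantKernel i x y) = 1) ∧
    (∀ f : ℝ → ℝ, ContinuousOn f (Set.Icc 0 1) →
      (∫ x in Set.Icc (0:ℝ) 1, kantOp i f x) = ∫ x in Set.Icc (0:ℝ) 1, f x) :=
  ⟨Kant.part1 i hi, Kant.part2 i hi, Kant.part3 i hi⟩
end

section
/- For every integer i ≥ 1, the map [0,1) ∋ x ↦ k_i(x, ·) ∈ L¹([0,1), λ) is continuous in the L¹-norm; equivalently, the map [0,1) ∋ x ↦ T̂_i'δ_x is continuous for the total variation norm on measures. -/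
open MeasureTheory Filter Set

private lemma abs_pow_sub_pow_le' {a b R : ℝ} (ha : |a| ≤ R) (hb : |b| ≤ R) :
    ∀ n : ℕ, |a ^ n - b ^ n| ≤ n * R ^ (n - 1) * |a - b| := by
  have hR : 0 ≤ R := le_trans (abs_nonneg a) ha
  intro n
  induction n with
  | zero => simp
  | succ n ih =>
    have hkey : a ^ (n + 1) - b ^ (n + 1) = a * (a ^ n - b ^ n) + (a - b) * b ^ n := by ring
    have h1 : |a ^ (n + 1) - b ^ (n + 1)| ≤ |a| * |a ^ n - b ^ n| + |a - b| * |b| ^ n := by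
      rw [hkey]
      calc |a * (a ^ n - b ^ n) + (a - b) * b ^ n|
          ≤ |a * (a ^ n - b ^ n)| + |(a - b) * b ^ n| := abs_add_le _ _
        _ = |a| * |a ^ n - b ^ n| + |a - b| * |b| ^ n := by rw [abs_mul, abs_mul, abs_pow]
    have h2 : |a| * |a ^ n - b ^ n| ≤ R * (n * R ^ (n - 1) * |a - b|) :=
      mul_le_mul ha ih (abs_nonneg _) hR
    have h3 : |a - b| * |b| ^ n ≤ |a - b| * R ^ n :=
      mul_le_mul_of_nonneg_left (pow_le_pow_left₀ (abs_nonneg b) hb n) (abs_nonneg _)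
    have h4 : R * (↑n * R ^ (n - 1) * |a - b|) + |a - b| * R ^ n
        ≤ (↑(n + 1)) * R ^ (n + 1 - 1) * |a - b| := by
      cases n with
      | zero => simp
      | succ m =>
        simp only [Nat.add_sub_cancel]
        push_cast
        exact le_of_eq (by ring)
    linarith

private lemma summable_master (i : ℕ) {r : ℝ} (h0 : 0 < r) (h1 : r < 1) :
    Summable fun j : ℕ => (Nat.choose (i + j + 1) j : ℝ) * (2 * j + i) * r ^ j := by
  have hg : Summable fun n : ℕ => (n : ℝ) ^ (i + 2) * r ^ n :=
    summable_pow_mul_geometric_of_norm_lt_one _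
      (by rw [Real.norm_eq_abs, abs_of_pos h0]; exact h1)
  have hshift : Summable fun j : ℕ => ((i + j + 1 : ℕ) : ℝ) ^ (i + 2) * r ^ (i + j + 1) :=
    hg.comp_injective (fun a b hab => by omega)
  have hmain : Summable fun j : ℕ => 2 * (((i + j + 1 : ℕ) : ℝ) ^ (i + 2) * r ^ j) := by
    refine ((hshift.mul_left (2 * (r ^ (i + 1))⁻¹)).congr fun j => ?_)
    have hrpow : (r : ℝ) ^ (i + 1) ≠ 0 := by positivity
    rw [pow_add]
    field_simp
    ring
  refine Summable.of_nonneg_of_le (fun j => by positivity) (fun j => ?_) hmain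
  have hC : (Nat.choose (i + j + 1) j : ℝ) ≤ ((i + j + 1 : ℕ) : ℝ) ^ (i + 1) := by
    have h1 : Nat.choose (i + j + 1) j = Nat.choose (i + j + 1) (i + 1) := by
      rw [← Nat.choose_symm (by omega : j ≤ i + j + 1)]
      congr 1
      omega
    rw [h1]
    exact_mod_cast Nat.cast_le.2 (Nat.choose_le_pow (i + j + 1) (i + 1))
  have h2 : (2 * (j : ℝ) + i) ≤ 2 * ((i + j + 1 : ℕ) : ℝ) := by push_cast; linarith
  calc (Nat.choose (i + j + 1) j : ℝ) * (2 * j + i) * r ^ j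
      ≤ ((i + j + 1 : ℕ) : ℝ) ^ (i + 1) * (2 * ((i + j + 1 : ℕ) : ℝ)) * r ^ j := by
        gcongr
    _ = 2 * (((i + j + 1 : ℕ) : ℝ) ^ (i + 2) * r ^ j) := by ring

private lemma key_ineq {i j : ℕ} {a b r : ℝ} (ha0 : 0 ≤ a) (har : a ≤ r) (hb0 : 0 ≤ b)
    (hbr : b ≤ r) (hr : 1 / 2 ≤ r) (hr1 : r ≤ 1) :
    |a ^ j * (1 - a) ^ i - b ^ j * (1 - b) ^ i| ≤ (2 * j + i) * r ^ j * |a - b| := by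
  have hr0 : (0 : ℝ) ≤ r := by linarith
  have h1 : |a ^ j - b ^ j| ≤ j * r ^ (j - 1) * |a - b| :=
    abs_pow_sub_pow_le' (by rwa [abs_of_nonneg ha0]) (by rwa [abs_of_nonneg hb0]) j
  have h2 : |(1 - a) ^ i - (1 - b) ^ i| ≤ i * |a - b| := by
    have := abs_pow_sub_pow_le' (a := 1 - a) (b := 1 - b) (R := 1)
      (by rw [abs_of_nonneg (by linarith)]; linarith)
      (by rw [abs_of_nonneg (by linarith)]; linarith) i
    simpa [abs_sub_comm (1 - a) (1 - b), sub_sub_sub_cancel_left, abs_sub_comm a b] using this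
  have hsplit : a ^ j * (1 - a) ^ i - b ^ j * (1 - b) ^ i
      = (a ^ j - b ^ j) * (1 - a) ^ i + b ^ j * ((1 - a) ^ i - (1 - b) ^ i) := by ring
  have hpow1 : (1 - a) ^ i ≤ 1 := pow_le_one₀ (by linarith) (by linarith)
  have hpow0 : (0 : ℝ) ≤ (1 - a) ^ i := pow_nonneg (by linarith) i
  have hbj : b ^ j ≤ r ^ j := pow_le_pow_left₀ hb0 hbr j
  have hbj0 : (0 : ℝ) ≤ b ^ j := pow_nonneg hb0 j
  have hjr : (j : ℝ) * r ^ (j - 1) ≤ 2 * j * r ^ j := by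
    cases j with
    | zero => simp
    | succ m =>
      have h : r ^ (m + 1 - 1) ≤ 2 * r ^ (m + 1) := by
        have : r ^ (m + 1) = r * r ^ m := by rw [pow_succ]; ring
        rw [this]
        simp only [Nat.add_sub_cancel]
        nlinarith [pow_nonneg hr0 m]
      have hm : (0 : ℝ) ≤ (m + 1 : ℕ) := by positivity
      calc ((m + 1 : ℕ) : ℝ) * r ^ (m + 1 - 1) ≤ ((m + 1 : ℕ) : ℝ) * (2 * r ^ (m + 1)) :=
            mul_le_mul_of_nonneg_left h hm
        _ = 2 * ((m + 1 : ℕ) : ℝ) * r ^ (m + 1) := by ring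
  calc |a ^ j * (1 - a) ^ i - b ^ j * (1 - b) ^ i|
      ≤ |a ^ j - b ^ j| * (1 - a) ^ i + b ^ j * |(1 - a) ^ i - (1 - b) ^ i| := by
        rw [hsplit]
        refine (abs_add_le _ _).trans ?_
        rw [abs_mul, abs_mul, abs_of_nonneg hpow0, abs_of_nonneg hbj0]
    _ ≤ (j * r ^ (j - 1) * |a - b|) * 1 + r ^ j * (i * |a - b|) := by
        refine add_le_add ?_ ?_
        · exact mul_le_mul h1 hpow1 hpow0 (by positivity)
        · exact mul_le_mul hbj h2 (abs_nonneg _) (by positivity)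
    _ ≤ (2 * j * r ^ j) * |a - b| + r ^ j * (i * |a - b|) := by
        nlinarith [abs_nonneg (a - b)]
    _ = (2 * j + i) * r ^ j * |a - b| := by ring

private lemma kern_bound (i : ℕ) (hi : 1 ≤ i) {x x' r : ℝ} (hx : 0 ≤ x) (hx' : 0 ≤ x')
    (hxr : x ≤ r) (hx'r : x' ≤ r) (hr : 1 / 2 ≤ r) (hr1 : r < 1) (y : ℝ) :
    |kantKernel i x' y - kantKernel i x y| ≤
      (∑' j : ℕ, ((i : ℝ) + 1) * (Nat.choose (i + j + 1) j : ℝ) * (2 * j + i) * r ^ j)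
        * |x' - x| := by
  have hr0 : (0 : ℝ) < r := by linarith
  set ind : ℕ → ℝ := fun j =>
    Set.indicator (Set.Ico ((j : ℝ) / ((i : ℝ) + j)) (((j : ℝ) + 1) / ((i : ℝ) + (j : ℝ) + 1)))
      (fun _ => (1 : ℝ)) y with hind_def
  have hind0 : ∀ j, 0 ≤ ind j := fun j => Set.indicator_nonneg (fun _ _ => zero_le_one) y
  have hind1 : ∀ j, ind j ≤ 1 := by
    intro j
    rw [hind_def]
    by_cases h : y ∈ Set.Ico ((j : ℝ) / ((i : ℝ) + j)) (((j : ℝ) + 1) / ((i : ℝ) + (j : ℝ) + 1))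
    · simp [Set.indicator_of_mem h]
    · simp [Set.indicator_of_notMem h]
  set F : ℝ → ℕ → ℝ := fun t j =>
    ((i : ℝ) + 1) * (1 - t) ^ i * ((Nat.choose (i + j + 1) j : ℝ) * t ^ j * ind j) with hF_def
  set b : ℕ → ℝ := fun j =>
    ((i : ℝ) + 1) * (Nat.choose (i + j + 1) j : ℝ) * (2 * j + i) * r ^ j with hb_def
  have hb_sum : Summable b := by
    refine ((summable_master i hr0 hr1).mul_left ((i : ℝ) + 1)).congr fun j => ?_
    rw [hb_def]
    ring
  have hone_le : ∀ j : ℕ, (1 : ℝ) ≤ 2 * j + i := by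
    intro j
    have : (1 : ℝ) ≤ (i : ℝ) := by exact_mod_cast hi
    have : (0 : ℝ) ≤ (j : ℝ) := Nat.cast_nonneg j
    push_cast
    linarith
  have hFle : ∀ t : ℝ, 0 ≤ t → t ≤ r → ∀ j, F t j ≤ b j := by
    intro t ht0 htr j
    rw [hF_def, hb_def]
    have h1t : (1 - t) ^ i ≤ 1 := pow_le_one₀ (by linarith) (by linarith)
    have htj : t ^ j ≤ r ^ j := pow_le_pow_left₀ ht0 htr j
    calc ((i : ℝ) + 1) * (1 - t) ^ i * ((Nat.choose (i + j + 1) j : ℝ) * t ^ j * ind j)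
        ≤ ((i : ℝ) + 1) * 1 * ((Nat.choose (i + j + 1) j : ℝ) * r ^ j * 1) := by
          gcongr <;> first | exact hind0 j | exact hind1 j | exact mul_nonneg (mul_nonneg (Nat.cast_nonneg _) (pow_nonneg ht0 j)) (hind0 j) | positivity
      _ = ((i : ℝ) + 1) * (Nat.choose (i + j + 1) j : ℝ) * 1 * r ^ j := by ring
      _ ≤ ((i : ℝ) + 1) * (Nat.choose (i + j + 1) j : ℝ) * (2 * j + i) * r ^ j := by
          gcongr <;> first | exact hone_le j | positivity
  have hF0 : ∀ t : ℝ, 0 ≤ t → t ≤ r → ∀ j, 0 ≤ F t j := by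
    intro t ht0 htr j
    rw [hF_def]
    have : (0 : ℝ) ≤ (1 - t) ^ i := pow_nonneg (by linarith) i
    have := hind0 j
    positivity
  have hFsum : ∀ t : ℝ, 0 ≤ t → t ≤ r → Summable (F t) := fun t ht0 htr =>
    Summable.of_nonneg_of_le (hF0 t ht0 htr) (hFle t ht0 htr) hb_sum
  have hker : ∀ t : ℝ, kantKernel i t y = ∑' j, F t j := by
    intro t
    rw [kantKernel, ← tsum_mul_left]
  have hdiff : ∀ j, |F x' j - F x j| ≤ b j * |x' - x| := by
    intro j
    have heq : F x' j - F x j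
        = ((i : ℝ) + 1) * (Nat.choose (i + j + 1) j : ℝ) * ind j
          * (x' ^ j * (1 - x') ^ i - x ^ j * (1 - x) ^ i) := by
      rw [hF_def]
      ring
    have hc0 : (0 : ℝ) ≤ ((i : ℝ) + 1) * (Nat.choose (i + j + 1) j : ℝ) * ind j := by
      have := hind0 j
      positivity
    rw [heq, abs_mul, abs_of_nonneg hc0, hb_def]
    calc ((i : ℝ) + 1) * (Nat.choose (i + j + 1) j : ℝ) * ind j
          * |x' ^ j * (1 - x') ^ i - x ^ j * (1 - x) ^ i|
        ≤ ((i : ℝ) + 1) * (Nat.choose (i + j + 1) j : ℝ) * 1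
          * ((2 * j + i) * r ^ j * |x' - x|) := by
          gcongr <;> first
            | exact hind1 j
            | exact key_ineq hx' hx'r hx hxr hr (le_of_lt hr1)
            | positivity
      _ = ((i : ℝ) + 1) * (Nat.choose (i + j + 1) j : ℝ) * (2 * j + i) * r ^ j * |x' - x| := by
          ring
  have habs_sum : Summable fun j => |F x' j - F x j| :=
    Summable.of_nonneg_of_le (fun j => abs_nonneg _) hdiff (hb_sum.mul_right _)
  calc |kantKernel i x' y - kantKernel i x y|
      = |∑' j, (F x' j - F x j)| := by
        rw [hker x', hker x, Summable.tsum_sub (hFsum x' hx' hx'r) (hFsum x hx hxr)]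
    _ ≤ ∑' j, |F x' j - F x j| := by
        have := norm_tsum_le_tsum_norm (f := fun j => F x' j - F x j)
          (by simpa [Real.norm_eq_abs] using habs_sum)
        simpa [Real.norm_eq_abs] using this
    _ ≤ ∑' j, b j * |x' - x| := Summable.tsum_le_tsum hdiff habs_sum (hb_sum.mul_right _)
    _ = (∑' j, b j) * |x' - x| := tsum_mul_right

/-- The map `[0,1) ∋ x ↦ k_i(x,·) ∈ L¹([0,1), λ)` is continuous in the `L¹` norm
(equivalently, `x ↦ T̂_i'δ_x` is continuous in total variation). -/
theorem kantorovich_kernel_L1_continuous (i : ℕ) (hi : 1 ≤ i) :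
    ∀ x ∈ Set.Ico (0:ℝ) 1, ∀ ε > 0, ∃ δ > 0, ∀ x' ∈ Set.Ico (0:ℝ) 1,
      |x' - x| < δ →
        (∫ y in Set.Ico (0:ℝ) 1, |kantKernel i x' y - kantKernel i x y|) < ε := by
  intro x hx ε hε
  obtain ⟨hx0, hx1⟩ := hx
  set r : ℝ := (1 + x) / 2 with hr_def
  have hr : 1 / 2 ≤ r := by rw [hr_def]; linarith
  have hr1 : r < 1 := by rw [hr_def]; linarith
  have hr0 : (0 : ℝ) < r := by linarith
  set M : ℝ := ∑' j : ℕ, ((i : ℝ) + 1) * (Nat.choose (i + j + 1) j : ℝ) * (2 * j + i) * r ^ j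
    with hM_def
  have hM0 : 0 ≤ M := tsum_nonneg fun j => by positivity
  refine ⟨min ((1 - x) / 2) (ε / (M + 1)), lt_min (by linarith) (by positivity), ?_⟩
  intro x' hx' hd
  obtain ⟨hx'0, hx'1⟩ := hx'
  have hd1 : |x' - x| < (1 - x) / 2 := lt_of_lt_of_le hd (min_le_left _ _)
  have hd2 : |x' - x| < ε / (M + 1) := lt_of_lt_of_le hd (min_le_right _ _)
  have hx'r : x' ≤ r := by
    have h := (abs_lt.1 hd1).2
    rw [hr_def]; linarith
  have hxr : x ≤ r := by rw [hr_def]; linarith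
  have hbd : ∀ y : ℝ, |kantKernel i x' y - kantKernel i x y| ≤ M * |x' - x| :=
    fun y => kern_bound i hi hx0 hx'0 hxr hx'r hr hr1 y
  have hfin : M * |x' - x| < ε := by
    have h1 : M * |x' - x| ≤ M * (ε / (M + 1)) :=
      mul_le_mul_of_nonneg_left (le_of_lt hd2) hM0
    have h2 : M * (ε / (M + 1)) < (M + 1) * (ε / (M + 1)) :=
      mul_lt_mul_of_pos_right (by linarith) (by positivity)
    have h3 : (M + 1) * (ε / (M + 1)) = ε := by field_simp
    linarith
  by_cases hint : IntegrableOn (fun y => |kantKernel i x' y - kantKernel i x y|)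
      (Set.Ico (0:ℝ) 1) volume
  · have hvol : volume (Set.Ico (0:ℝ) 1) < ⊤ := by
      rw [Real.volume_Ico]
      exact ENNReal.ofReal_lt_top
    have hmono : (∫ y in Set.Ico (0:ℝ) 1, |kantKernel i x' y - kantKernel i x y|)
        ≤ ∫ _y in Set.Ico (0:ℝ) 1, M * |x' - x| :=
      setIntegral_mono_on hint (integrableOn_const hvol.ne)
        measurableSet_Ico (fun y _ => hbd y)
    have hconst : (∫ _y in Set.Ico (0:ℝ) 1, M * |x' - x|) = M * |x' - x| := by
      rw [setIntegral_const, Real.volume_real_Ico]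
      norm_num
    rw [hconst] at hmono
    linarith
  · rw [MeasureTheory.integral_undef hint]
    exact hε
end

section
/- For every integer i ≥ 1 and every bounded Borel measurable function h : [0,1) → ℝ, the function x ↦ ∫_0^1 h(y) k_i(x, y) dy is continuous on [0,1) (strong Feller property of T̂_i on [0,1)). -/
open MeasureTheory Filter Set

/-!
The intervals `[j/(i+j), (j+1)/(i+j+1))` partition `[0,1)`, and `y` lies in the one with
`j = ⌊i y / (1 - y)⌋`. Hence on `[0,1)` the series defining `k_i(x, y)` has a single nonzero term,
a polynomial in `x` indexed by a measurable function of `y`. For `x ≤ r < 1` these polynomials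
are bounded uniformly in the index, since `C(i+j+1, j) r^j` is a term of the series
`∑ C(j+i+1, i+1) r^j = (1 - r)^-(i+2)`; dominated convergence then gives continuity.
-/

open Topology

theorem continuousOn_integral_mul_comp_of_locally_bounded {α X : Type*} [MeasurableSpace α]
    {μ : Measure α} [IsFiniteMeasure μ] [TopologicalSpace X] [FirstCountableTopology X]
    {s : Set X} {g : α → ℝ} {C : ℝ} (hg : AEStronglyMeasurable g μ) (hgC : ∀ᵐ a ∂μ, ‖g a‖ ≤ C)
    {J : α → ℕ} (hJ : Measurable J) {F : X → ℕ → ℝ} (hF : ∀ n, ContinuousOn (F · n) s)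
    (hF_bdd : ∀ x₀ ∈ s, ∃ B, ∀ᶠ x in 𝓝[s] x₀, ∀ n, ‖F x n‖ ≤ B) :
    ContinuousOn (fun x => ∫ a, g a * F x (J a) ∂μ) s := by
  intro x₀ hx₀
  obtain ⟨B, hB⟩ := hF_bdd x₀ hx₀
  refine continuousWithinAt_of_dominated (bound := fun _ => C * B) ?_ ?_ (integrable_const _) ?_
  · exact .of_forall fun x => hg.mul (measurable_from_nat.comp hJ).aestronglyMeasurable
  · filter_upwards [hB] with x hx
    filter_upwards [hgC] with a ha
    rw [norm_mul]
    exact mul_le_mul ha (hx _) (norm_nonneg _) ((norm_nonneg _).trans ha)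
  · exact .of_forall fun a => (continuousWithinAt_const.mul (hF (J a) x₀ hx₀))

theorem mem_Ico_div_add_iff {a y : ℝ} (ha : 0 < a) (hy : y < 1) {t : ℝ} (ht : 0 ≤ t) :
    y ∈ Ico (t / (a + t)) ((t + 1) / (a + t + 1)) ↔
      t ≤ a * y / (1 - y) ∧ a * y / (1 - y) < t + 1 := by
  have h1y : 0 < 1 - y := by linarith
  rw [mem_Ico, div_le_iff₀ (by linarith), lt_div_iff₀ (by linarith), le_div_iff₀ h1y,
    div_lt_iff₀ h1y]
  constructor <;> rintro ⟨h₁, h₂⟩ <;> constructor <;> nlinarith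

theorem choose_mul_pow_le {r : ℝ} (hr0 : 0 ≤ r) (hr1 : r < 1) (k j : ℕ) :
    ((j + k).choose k : ℝ) * r ^ j ≤ 1 / (1 - r) ^ (k + 1) :=
  le_hasSum (hasSum_choose_mul_geometric_of_norm_lt_one k (by rwa [Real.norm_of_nonneg hr0]))
    j fun _ _ => by positivity

/-- The index `j` of the interval `[j/(i+j), (j+1)/(i+j+1))` containing `y ∈ [0,1)`. -/
noncomputable def kantIndex (i : ℕ) (y : ℝ) : ℕ := ⌊(i : ℝ) * y / (1 - y)⌋₊

theorem measurable_kantIndex (i : ℕ) : Measurable (kantIndex i) :=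
  ((measurable_const.mul measurable_id).div (measurable_const.sub measurable_id)).nat_floor

def kantTerm (i : ℕ) (x : ℝ) (j : ℕ) : ℝ :=
  ((i : ℝ) + 1) * (1 - x) ^ i * ((i + j + 1).choose j * x ^ j)

theorem continuous_kantTerm (i j : ℕ) : Continuous (kantTerm i · j) := by
  unfold kantTerm; fun_prop

theorem kantKernel_eq_kantTerm {i : ℕ} (hi : 1 ≤ i) {y : ℝ} (hy : y ∈ Ico 0 1) (x : ℝ) :
    kantKernel i x y = kantTerm i x (kantIndex i y) := by
  have hi' : (0 : ℝ) < i := by exact_mod_cast hi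
  have ht : 0 ≤ (i : ℝ) * y / (1 - y) := div_nonneg (by nlinarith [hy.1]) (by linarith [hy.2])
  have hmem : ∀ j : ℕ, y ∈ Ico ((j : ℝ) / (i + j)) ((j + 1) / (i + j + 1)) ↔ kantIndex i y = j :=
    fun j => (mem_Ico_div_add_iff hi' hy.2 j.cast_nonneg).trans (Nat.floor_eq_iff ht).symm
  rw [kantKernel, kantTerm, tsum_eq_single (kantIndex i y), indicator_of_mem ((hmem _).2 rfl),
    mul_one]
  intro j hj
  rw [indicator_of_notMem (fun h => hj ((hmem j).1 h).symm), mul_zero]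

theorem abs_kantTerm_le {i : ℕ} {r x : ℝ} (hr : r < 1) (hx : x ∈ Icc 0 r) (j : ℕ) :
    |kantTerm i x j| ≤ ((i : ℝ) + 1) / (1 - r) ^ (i + 2) := by
  obtain ⟨hx0, hxr⟩ := hx
  have h1x : |1 - x| ^ i ≤ 1 :=
    pow_le_one₀ (abs_nonneg _) (by rw [abs_le]; constructor <;> linarith)
  have hcoef : ((i + j + 1).choose j : ℝ) * |x| ^ j ≤ 1 / (1 - r) ^ (i + 2) := by
    calc ((i + j + 1).choose j : ℝ) * |x| ^ j ≤ ((j + (i + 1)).choose (i + 1) : ℝ) * r ^ j := by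
          rw [show i + j + 1 = j + (i + 1) by ring, Nat.choose_symm_add, abs_of_nonneg hx0]
          gcongr
      _ ≤ 1 / (1 - r) ^ (i + 2) := choose_mul_pow_le (hx0.trans hxr) hr _ _
  rw [kantTerm, abs_mul, abs_mul, abs_mul, abs_pow, abs_pow, Nat.abs_cast,
    abs_of_nonneg (by positivity : (0 : ℝ) ≤ i + 1), div_eq_mul_one_div]
  calc ((i : ℝ) + 1) * |1 - x| ^ i * (((i + j + 1).choose j : ℝ) * |x| ^ j)
      ≤ ((i : ℝ) + 1) * 1 * (1 / (1 - r) ^ (i + 2)) := by gcongr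
    _ = _ := by rw [mul_one]

theorem kantTerm_locally_bounded (i : ℕ) :
    ∀ x₀ ∈ Ico (0 : ℝ) 1, ∃ B, ∀ᶠ x in 𝓝[Ico 0 1] x₀, ∀ j, ‖kantTerm i x j‖ ≤ B := by
  intro x₀ ⟨_, hx₀1⟩
  have hr : (1 + x₀) / 2 < 1 := by linarith
  have hx₀r : x₀ < (1 + x₀) / 2 := by linarith
  refine ⟨((i : ℝ) + 1) / (1 - (1 + x₀) / 2) ^ (i + 2), ?_⟩
  filter_upwards [self_mem_nhdsWithin, nhdsWithin_le_nhds (Iic_mem_nhds hx₀r)] with x hx hxr j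
  exact abs_kantTerm_le hr ⟨hx.1, hxr⟩ j

/-- Strong Feller property of `T̂_i` on `[0,1)`: for every bounded Borel function `h`,
the function `x ↦ ∫_0^1 h(y) k_i(x,y) dy` is continuous on `[0,1)`. -/
theorem kantorovich_strong_feller (i : ℕ) (hi : 1 ≤ i)
    (h : ℝ → ℝ) (hmeas : Measurable h) (hbdd : ∃ C : ℝ, ∀ y : ℝ, |h y| ≤ C) :
    ContinuousOn (fun x => ∫ y in Set.Ico (0:ℝ) 1, h y * kantKernel i x y)
      (Set.Ico (0:ℝ) 1) := by
  obtain ⟨C, hC⟩ := hbdd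
  have hkernel : ∀ x, ∫ y in Ico 0 1, h y * kantKernel i x y =
      ∫ y in Ico 0 1, h y * kantTerm i x (kantIndex i y) := fun x =>
    setIntegral_congr_fun measurableSet_Ico fun y hy => by rw [kantKernel_eq_kantTerm hi hy]
  simp_rw [hkernel]
  exact continuousOn_integral_mul_comp_of_locally_bounded hmeas.aestronglyMeasurable
    (.of_forall hC) (measurable_kantIndex i) (fun j => (continuous_kantTerm i j).continuousOn)
    (kantTerm_locally_bounded i)
end

section
/- For every integer i ≥ 1: if D ⊆ [0,1) is a Borel set with λ(D) > 0 such that for every m ≥ 1 the function T̂_i^m 1_D coincides λ-almost everywhere with the indicator function of some Borel set D_m ⊆ [0,1), then λ(D) = 1. That is, the deterministic σ-field of T̂_i on ([0,1), λ) is trivial. -/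
open MeasureTheory Filter Set

/-- The action of `T̂_i` on bounded Borel functions on `[0,1)`. -/
noncomputable def kantMarkov (i : ℕ) (h : ℝ → ℝ) : ℝ → ℝ := fun x =>
  ∫ y in Set.Ico (0:ℝ) 1, h y * kantKernel i x y


namespace KantAux

noncomputable def a (i j : ℕ) : ℝ := (j : ℝ) / ((i : ℝ) + j)

noncomputable def c (i : ℕ) (x : ℝ) (j : ℕ) : ℝ :=
  ((i : ℝ) + 1) * (1 - x) ^ i * ((Nat.choose (i + j + 1) j : ℝ) * x ^ j)

def I (i j : ℕ) : Set ℝ := Set.Ico (a i j) (a i (j + 1))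

variable {i : ℕ} (hi : 1 ≤ i)

lemma denom_pos (j : ℕ) (hi : 1 ≤ i) : (0 : ℝ) < (i : ℝ) + j := by
  have : (1 : ℝ) ≤ (i : ℝ) := by exact_mod_cast hi
  positivity

lemma a_nonneg (j : ℕ) (hi : 1 ≤ i) : 0 ≤ a i j :=
  div_nonneg (by positivity) (denom_pos j hi).le

lemma a_lt_one (j : ℕ) (hi : 1 ≤ i) : a i j < 1 := by
  rw [a, div_lt_one (denom_pos j hi)]
  have : (1 : ℝ) ≤ (i : ℝ) := by exact_mod_cast hi
  linarith

lemma a_lt_succ (j : ℕ) (hi : 1 ≤ i) : a i j < a i (j + 1) := by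
  rw [a, a, div_lt_div_iff₀ (denom_pos j hi) (by push_cast; exact_mod_cast denom_pos (j+1) hi)]
  have h1 : (1 : ℝ) ≤ (i : ℝ) := by exact_mod_cast hi
  have h0 : (0:ℝ) ≤ (j:ℝ) := Nat.cast_nonneg j
  push_cast
  nlinarith

lemma a_strictMono (hi : 1 ≤ i) : StrictMono (a i) :=
  strictMono_nat_of_lt_succ (fun j => a_lt_succ j hi)

lemma I_subset (j : ℕ) (hi : 1 ≤ i) : I i j ⊆ Set.Ico (0:ℝ) 1 := fun y hy =>
  ⟨le_trans (a_nonneg j hi) hy.1, lt_of_lt_of_le hy.2 (a_lt_one (j+1) hi).le⟩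

lemma I_disjoint (hi : 1 ≤ i) : Pairwise (Function.onFun Disjoint (I i)) := by
  intro j k hjk
  wlog h : j < k generalizing j k
  · exact ((this hjk.symm (by omega)).symm)
  rw [Function.onFun]
  apply Set.disjoint_left.2
  intro y hy hy'
  have h1 : y < a i (j+1) := hy.2
  have h2 : a i k ≤ y := hy'.1
  have : a i (j+1) ≤ a i k := (a_strictMono hi).monotone (by omega)
  linarith

lemma I_cover (hi : 1 ≤ i) : Set.Ico (0:ℝ) 1 = ⋃ j, I i j := by
  apply Set.Subset.antisymm
  · intro y hy
    have hex : ∃ j : ℕ, y < a i (j + 1) := by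
      obtain ⟨n, hn⟩ := exists_nat_gt ((i : ℝ) / (1 - y))
      refine ⟨n, ?_⟩
      have h1y : (0:ℝ) < 1 - y := by linarith [hy.2]
      rw [a, lt_div_iff₀ (by push_cast; exact_mod_cast denom_pos (n+1) hi)]
      rw [div_lt_iff₀ h1y] at hn
      push_cast
      nlinarith [hy.1, hy.2, (Nat.cast_nonneg n : (0:ℝ) ≤ n)]
    classical
    refine Set.mem_iUnion.2 ⟨Nat.find hex, ?_, Nat.find_spec hex⟩
    cases h : Nat.find hex with
    | zero => simpa [a] using hy.1
    | succ j' =>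
      by_contra hlt
      push_neg at hlt
      exact Nat.find_min hex (m := j') (by omega) hlt
  · exact Set.iUnion_subset fun j => I_subset j hi

lemma kernel_term_set (i j : ℕ) :
    Set.Ico ((j : ℝ) / ((i : ℝ) + j)) (((j : ℝ) + 1) / ((i : ℝ) + (j : ℝ) + 1)) = I i j := by
  rw [I, a, a]
  congr 2 <;> push_cast <;> ring

lemma kernel_eq_on (hi : 1 ≤ i) (x : ℝ) {j : ℕ} {y : ℝ} (hy : y ∈ I i j) :
    kantKernel i x y = c i x j := by
  rw [kantKernel, c]
  congr 1
  rw [tsum_eq_single j]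
  · simp [kernel_term_set, Set.indicator_of_mem hy]
  · intro j' hj'
    have : y ∉ I i j' := fun hy' =>
      Set.disjoint_left.1 (I_disjoint hi hj'.symm) hy hy'
    simp [kernel_term_set, Set.indicator_of_notMem this]

lemma kernel_nonneg (x : ℝ) (hx0 : 0 ≤ x) (hx1 : x ≤ 1) (y : ℝ) :
    0 ≤ kantKernel i x y := by
  rw [kantKernel]
  have h1 : (0:ℝ) ≤ 1 - x := by linarith
  apply mul_nonneg (by positivity)
  apply tsum_nonneg
  intro j
  apply mul_nonneg (by positivity)
  apply Set.indicator_nonneg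
  intro _ _; norm_num

lemma c_pos (hi : 1 ≤ i) {x : ℝ} (hx : x ∈ Set.Ioo (0:ℝ) 1) (j : ℕ) : 0 < c i x j := by
  rw [c]
  have h1 : (0:ℝ) < 1 - x := by linarith [hx.2]
  have h2 : (0:ℝ) < x := hx.1
  have h3 : 0 < Nat.choose (i + j + 1) j := Nat.choose_pos (by omega)
  have h3' : (0:ℝ) < (Nat.choose (i + j + 1) j : ℝ) := by exact_mod_cast h3
  positivity

lemma kernel_measurable (hi : 1 ≤ i) (x : ℝ) : Measurable (fun y => kantKernel i x y) := by
  unfold kantKernel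
  apply Measurable.const_mul
  set f : ℕ → ℝ → ℝ := fun j y => (Nat.choose (i + j + 1) j : ℝ) * x ^ j *
      Set.indicator (Set.Ico ((j : ℝ) / ((i : ℝ) + j)) (((j : ℝ) + 1) / ((i : ℝ) + (j : ℝ) + 1)))
        (fun _ => (1 : ℝ)) y with hf
  have hmeas : ∀ n, Measurable (fun y => ∑ j ∈ Finset.range n, f j y) := by
    intro n
    apply Finset.measurable_sum
    intro j _
    exact (measurable_const.indicator measurableSet_Ico).const_mul _
  apply measurable_of_tendsto_metrizable hmeas
  rw [tendsto_pi_nhds]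
  intro y
  have hsum : Summable (fun j => f j y) := by
    by_cases hy : y ∈ Set.Ico (0:ℝ) 1
    · rw [I_cover hi] at hy
      obtain ⟨j0, hj0⟩ := Set.mem_iUnion.1 hy
      apply summable_of_ne_finset_zero (s := {j0})
      intro j hj
      simp only [Finset.mem_singleton] at hj
      have : y ∉ I i j := fun hy' => Set.disjoint_left.1 (I_disjoint hi hj) hy' hj0
      simp [hf, kernel_term_set, Set.indicator_of_notMem this]
    · apply summable_of_ne_finset_zero (s := ∅)
      intro j _
      have : y ∉ I i j := fun hy' => hy (I_subset j hi hy')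
      simp [hf, kernel_term_set, Set.indicator_of_notMem this]
  exact hsum.hasSum.tendsto_sum_nat

end KantAux
namespace KantAux

lemma choose_identity {i : ℕ} (hi : 1 ≤ i) (j : ℕ) :
    (i + j + 1).choose j * ((i + 1) * i)
      = (j + (i - 1)).choose (i - 1) * ((i + j + 1) * (i + j)) := by
  obtain ⟨i', rfl⟩ : ∃ i', i = i' + 1 := ⟨i - 1, by omega⟩
  simp only [Nat.add_sub_cancel]
  have h1 := Nat.choose_symm (n := i' + j + 2) (k := j) (by omega)
  rw [show i' + j + 2 - j = i' + 2 from by omega] at h1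
  have h2 := Nat.add_one_mul_choose_eq (i' + j + 1) (i' + 1)
  have h3 := Nat.add_one_mul_choose_eq (i' + j) i'
  have e1 : i' + 1 + j + 1 = i' + j + 2 := by omega
  have e2 : i' + j + 1 + 1 = i' + j + 2 := by omega
  have e3 : i' + 1 + 1 = i' + 2 := by omega
  rw [e2, e3] at h2
  rw [e1, h1.symm]
  calc (i' + j + 2).choose (i' + 2) * ((i' + 1 + 1) * (i' + 1))
      = ((i' + j + 2).choose (i' + 2) * (i' + 2)) * (i' + 1) := by ring_nf
    _ = ((i' + j + 2) * (i' + j + 1).choose (i' + 1)) * (i' + 1) := by rw [← h2]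
    _ = (i' + j + 2) * ((i' + j + 1).choose (i' + 1) * (i' + 1)) := by ring
    _ = (i' + j + 2) * ((i' + j + 1) * (i' + j).choose i') := by rw [← h3]
    _ = (j + i').choose i' * ((i' + j + 2) * (i' + 1 + j)) := by
        rw [show i' + 1 + j = i' + j + 1 from by omega,
          show i' + j = j + i' from by omega]; ring

end KantAux
namespace KantAux

variable {i : ℕ}

lemma len_eq (hi : 1 ≤ i) (j : ℕ) :
    a i (j + 1) - a i j = (i : ℝ) / (((i : ℝ) + j) * ((i : ℝ) + j + 1)) := by
  have hd1 := denom_pos j hi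
  have hd2 := denom_pos (j + 1) hi
  push_cast at hd2
  rw [a, a]
  push_cast
  field_simp
  ring

lemma c_mul_len (hi : 1 ≤ i) (x : ℝ) (j : ℕ) :
    c i x j * (a i (j + 1) - a i j)
      = (1 - x) ^ i * (((j + (i - 1)).choose (i - 1) : ℝ) * x ^ j) := by
  have hd1 := denom_pos j hi
  have hd1' : ((i : ℝ) + j) ≠ 0 := ne_of_gt hd1
  have hd2' : ((i : ℝ) + j + 1) ≠ 0 := by positivity
  have keyR : ((i + j + 1).choose j : ℝ) * (((i : ℝ) + 1) * i)
      = ((j + (i - 1)).choose (i - 1) : ℝ) * (((i : ℝ) + j + 1) * ((i : ℝ) + j)) := by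
    exact_mod_cast choose_identity hi j
  rw [len_eq hi j, c]
  field_simp
  linear_combination ((1 - x) ^ i * x ^ j) * keyR

lemma I_measurable (j : ℕ) : MeasurableSet (I i j) := measurableSet_Ico

lemma lint_on_subset (hi : 1 ≤ i) (x : ℝ) (j : ℕ) {S : Set ℝ} (hS : MeasurableSet S)
    (hSsub : S ⊆ I i j) :
    ∫⁻ y in S, ENNReal.ofReal (kantKernel i x y)
      = ENNReal.ofReal (c i x j) * volume S := by
  rw [setLIntegral_congr_fun hS (id
    (fun y hy => by rw [kernel_eq_on hi x (hSsub hy)] : ∀ y ∈ S,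
      ENNReal.ofReal (kantKernel i x y) = ENNReal.ofReal (c i x j))),
    setLIntegral_const]

lemma lintegral_kernel (hi : 1 ≤ i) {x : ℝ} (hx : x ∈ Set.Ioo (0:ℝ) 1) :
    ∫⁻ y in Set.Ico (0:ℝ) 1, ENNReal.ofReal (kantKernel i x y) = 1 := by
  have hnorm : ‖x‖ < 1 := by rw [Real.norm_eq_abs, abs_lt]; exact ⟨by linarith [hx.1], hx.2⟩
  have h1x : (0:ℝ) < 1 - x := by linarith [hx.2]
  rw [I_cover hi, lintegral_iUnion I_measurable (I_disjoint hi)]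
  have hterm : ∀ j : ℕ, ∫⁻ y in I i j, ENNReal.ofReal (kantKernel i x y)
      = ENNReal.ofReal ((1 - x) ^ i * (((j + (i - 1)).choose (i - 1) : ℝ) * x ^ j)) := by
    intro j
    rw [lint_on_subset hi x j (I_measurable j) Set.Subset.rfl, I, Real.volume_Ico,
      ← ENNReal.ofReal_mul (c_pos hi hx j).le, c_mul_len hi x j]
  simp_rw [hterm]
  rw [← ENNReal.ofReal_tsum_of_nonneg
    (fun j => mul_nonneg (pow_nonneg h1x.le i)
      (mul_nonneg (Nat.cast_nonneg _) (pow_nonneg hx.1.le j)))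
    ((summable_choose_mul_geometric_of_norm_lt_one (i - 1) hnorm).mul_left _)]
  rw [tsum_mul_left, tsum_choose_mul_geometric_of_norm_lt_one (i - 1) hnorm,
    show i - 1 + 1 = i from by omega,
    show (1 - x) ^ i * (1 / (1 - x) ^ i) = 1 from by field_simp]
  exact ENNReal.ofReal_one

end KantAux

/-- The deterministic σ-field of `T̂_i` on `([0,1), λ)` is trivial: if `D ⊆ [0,1)` is a
Borel set of positive Lebesgue measure such that every iterate `T̂_i^m 1_D` coincides
λ-a.e. with an indicator function, then `λ(D) = 1`. -/
theorem kantorovich_deterministic_field_trivial (i : ℕ) (hi : 1 ≤ i)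
    (D : Set ℝ) (hDmeas : MeasurableSet D) (hDsub : D ⊆ Set.Ico 0 1)
    (hDpos : 0 < volume D)
    (hdet : ∀ m : ℕ, 1 ≤ m → ∃ Dm : Set ℝ, MeasurableSet Dm ∧ Dm ⊆ Set.Ico 0 1 ∧
      (kantMarkov i)^[m] (Set.indicator D (fun _ => (1:ℝ)))
        =ᵐ[volume.restrict (Set.Ico (0:ℝ) 1)] Set.indicator Dm (fun _ => (1:ℝ))) :
    volume D = 1 := by
  classical
  obtain ⟨D1, hD1meas, hD1sub, hae⟩ := hdet 1 le_rfl
  rw [Function.iterate_one] at hae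
  set μ := volume.restrict (Set.Ico (0:ℝ) 1) with hμ
  have hμuniv : μ Set.univ = 1 := by
    rw [hμ, Measure.restrict_apply_univ, Real.volume_Ico]; norm_num
  have hμne : μ ≠ 0 := by
    intro h; rw [h] at hμuniv; simp at hμuniv
  haveI : (MeasureTheory.ae μ).NeBot := ae_neBot.2 hμne
  have h0 : ∀ᵐ y ∂μ, y ∈ Set.Ico (0:ℝ) 1 := ae_restrict_mem measurableSet_Ico
  have hne : ∀ᵐ y ∂μ, y ≠ (0:ℝ) := by
    rw [ae_iff]
    have he : {y : ℝ | ¬ y ≠ 0} = {(0:ℝ)} := by ext y; simp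
    rw [he, hμ, Measure.restrict_apply (measurableSet_singleton 0)]
    exact le_antisymm ((measure_mono Set.inter_subset_left).trans_eq Real.volume_singleton)
      bot_le
  obtain ⟨x, hx_eq, hxmem, hxne⟩ := (hae.and (h0.and hne)).exists
  have hx : x ∈ Set.Ioo (0:ℝ) 1 := ⟨lt_of_le_of_ne hxmem.1 (Ne.symm hxne), hxmem.2⟩
  have hkmeas : Measurable (fun y => kantKernel i x y) := KantAux.kernel_measurable hi x
  have hknonneg : ∀ y, 0 ≤ kantKernel i x y :=
    KantAux.kernel_nonneg (i := i) x hx.1.le hx.2.le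
  have htotal := KantAux.lintegral_kernel hi hx
  -- Bochner integral as a lower Lebesgue integral
  have hv : kantMarkov i (Set.indicator D (fun _ => (1:ℝ))) x
      = (∫⁻ y in D, ENNReal.ofReal (kantKernel i x y)).toReal := by
    rw [kantMarkov]
    have h1 : ∀ y, Set.indicator D (fun _ => (1:ℝ)) y * kantKernel i x y
        = Set.indicator D (fun y => kantKernel i x y) y := by
      intro y; by_cases hy : y ∈ D <;> simp [hy]
    simp_rw [h1]
    rw [setIntegral_indicator hDmeas, Set.inter_eq_self_of_subset_right hDsub,
      integral_eq_lintegral_of_nonneg_ae (ae_of_all _ hknonneg)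
        hkmeas.aestronglyMeasurable]
  have hDfin : (∫⁻ y in D, ENNReal.ofReal (kantKernel i x y)) ≤ 1 :=
    htotal ▸ lintegral_mono' (Measure.restrict_mono hDsub le_rfl) le_rfl
  -- positivity of the integral over D
  have hDsubU : D ⊆ ⋃ j, KantAux.I i j := by rw [← KantAux.I_cover hi]; exact hDsub
  have hexj : ∃ j, 0 < volume (D ∩ KantAux.I i j) := by
    by_contra h
    push_neg at h
    have hD0 : volume D = 0 := by
      have hD : D = ⋃ j, D ∩ KantAux.I i j := by
        rw [← Set.inter_iUnion, Set.inter_eq_self_of_subset_left hDsubU]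
      rw [hD]
      exact measure_iUnion_null (fun j => le_zero_iff.1 (h j))
    exact absurd hD0 hDpos.ne'
  obtain ⟨j0, hj0⟩ := hexj
  have hpos : 0 < ∫⁻ y in D, ENNReal.ofReal (kantKernel i x y) := by
    have h1 : (0:ENNReal) < ENNReal.ofReal (KantAux.c i x j0) * volume (D ∩ KantAux.I i j0) :=
      ENNReal.mul_pos (ENNReal.ofReal_pos.2 (KantAux.c_pos hi hx j0)).ne' hj0.ne'
    have h2 := KantAux.lint_on_subset hi x j0 (hDmeas.inter (KantAux.I_measurable j0))
      (Set.inter_subset_right (s := D))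
    have h3 : (∫⁻ y in D ∩ KantAux.I i j0, ENNReal.ofReal (kantKernel i x y))
        ≤ ∫⁻ y in D, ENNReal.ofReal (kantKernel i x y) :=
      lintegral_mono' (Measure.restrict_mono Set.inter_subset_left le_rfl) le_rfl
    exact lt_of_lt_of_le (h2 ▸ h1) h3
  have hvpos : 0 < kantMarkov i (Set.indicator D (fun _ => (1:ℝ))) x := by
    rw [hv]
    exact ENNReal.toReal_pos hpos.ne' (lt_of_le_of_lt hDfin ENNReal.one_lt_top).ne
  have hv1 : kantMarkov i (Set.indicator D (fun _ => (1:ℝ))) x = 1 := by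
    rw [hx_eq] at hvpos ⊢
    by_cases hxD1 : x ∈ D1
    · simp [Set.indicator_of_mem hxD1]
    · simp [Set.indicator_of_notMem hxD1] at hvpos
  have hlintD : ∫⁻ y in D, ENNReal.ofReal (kantKernel i x y) = 1 := by
    have h2 := hv
    rw [hv1] at h2
    have hne' : (∫⁻ y in D, ENNReal.ofReal (kantKernel i x y)) ≠ ⊤ :=
      (lt_of_le_of_lt hDfin ENNReal.one_lt_top).ne
    rw [← ENNReal.ofReal_toReal hne', ← h2]
    simp
  -- the complement has measure zero
  set S := Set.Ico (0:ℝ) 1 \ D with hSdef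
  have hunion : D ∪ S = Set.Ico (0:ℝ) 1 := Set.union_diff_cancel hDsub
  have hdisj : Disjoint D S := Set.disjoint_sdiff_right
  have hSmeas : MeasurableSet S := measurableSet_Ico.diff hDmeas
  have hSzero : ∫⁻ y in S, ENNReal.ofReal (kantKernel i x y) = 0 := by
    have h := htotal
    rw [← hunion, lintegral_union hSmeas hdisj, hlintD] at h
    have h' : (1:ENNReal) + (∫⁻ y in S, ENNReal.ofReal (kantKernel i x y)) = 1 + 0 := by
      rw [add_zero]; exact h
    exact (ENNReal.add_right_inj ENNReal.one_ne_top).1 h'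
  have hSj : ∀ j, volume (S ∩ KantAux.I i j) = 0 := by
    intro j
    have heq := KantAux.lint_on_subset hi x j (hSmeas.inter (KantAux.I_measurable j))
      (Set.inter_subset_right (s := S))
    have hle : ∫⁻ y in S ∩ KantAux.I i j, ENNReal.ofReal (kantKernel i x y) ≤ 0 := by
      rw [← hSzero]
      exact lintegral_mono' (Measure.restrict_mono Set.inter_subset_left le_rfl) le_rfl
    rw [heq] at hle
    rcases mul_eq_zero.1 (le_zero_iff.1 hle) with h | h
    · exact absurd h (ENNReal.ofReal_pos.2 (KantAux.c_pos hi hx j)).ne'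
    · exact h
  have hSzero' : volume S = 0 := by
    have hScover : S ⊆ ⋃ j, S ∩ KantAux.I i j := by
      intro y hy
      have hy2 : y ∈ Set.Ico (0:ℝ) 1 := hy.1
      rw [KantAux.I_cover hi] at hy2
      obtain ⟨j, hj⟩ := Set.mem_iUnion.1 hy2
      exact Set.mem_iUnion.2 ⟨j, hy, hj⟩
    exact le_antisymm ((measure_mono hScover).trans
      ((measure_iUnion_le _).trans (by simp [hSj]))) bot_le
  have hIco : volume (Set.Ico (0:ℝ) 1) = 1 := by rw [Real.volume_Ico]; norm_num
  apply le_antisymm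
  · exact (measure_mono hDsub).trans_eq hIco
  · calc (1:ENNReal) = volume (Set.Ico (0:ℝ) 1) := hIco.symm
      _ = volume (D ∪ S) := by rw [hunion]
      _ ≤ volume D + volume S := measure_union_le _ _
      _ = volume D := by rw [hSzero', add_zero]
end

section
/- Fix an integer i ≥ 1 and set α_j(x) = (i+1) binom(i+j+1, j) (1−x)^i x^j. For every x with 1/(i+2) < x < 1, and j_max = ⌊(i+1)x/(1−x)⌋, one has α_{j_max}(x) ≥ ((i+2)x − 1)^{i+1} / ((1−x) · i!) · x^{(i+1)x/(1−x)}. -/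
open Filter Set

open scoped Nat

/-- `α_j(x) = (i+1) · binom(i+j+1, j) · (1−x)^i · x^j`, the value of the density of
`T̂_i'δ_x` on the interval `[j/(i+j), (j+1)/(i+j+1))`. -/
noncomputable def alphaKant (i j : ℕ) (x : ℝ) : ℝ :=
  ((i : ℝ) + 1) * (Nat.choose (i + j + 1) j : ℝ) * (1 - x) ^ i * x ^ j

/-!
With `j = ⌊t⌋₊` for `t = (i+1)x/(1−x)`, the factor `x^t` is at most `x^j` because `x < 1`,
and `(i+2)x − 1 ≤ (i+1)x < (j+1)(1−x)`. So the bound reduces to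
`(j+1)^(i+1) ≤ (i+1)! · binom(i+j+1, j)`, i.e. `(j+1)^(i+1)` is at most the rising factorial
`(j+1)(j+2)⋯(j+i+1)`.
-/

theorem Nat.succ_pow_le_factorial_mul_choose (i j : ℕ) :
    (j + 1) ^ (i + 1) ≤ (i + 1)! * (i + j + 1).choose j := by
  have h := Nat.pow_succ_le_ascFactorial (j + 1) (i + 1)
  rwa [Nat.ascFactorial_eq_factorial_mul_choose, ← Nat.choose_symm_add,
    show j + (i + 1) = i + j + 1 by ring] at h

theorem le_natFloor_div_add_one_mul {s d : ℝ} (hd : 0 < d) : s ≤ (⌊s / d⌋₊ + 1) * d :=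
  ((div_lt_iff₀ hd).1 (Nat.lt_floor_add_one _)).le

theorem Real.rpow_le_pow_natFloor {x t : ℝ} (hx0 : 0 < x) (hx1 : x ≤ 1) (ht : 0 ≤ t) :
    x ^ t ≤ x ^ ⌊t⌋₊ := by
  rw [← Real.rpow_natCast]
  exact Real.rpow_le_rpow_of_exponent_ge hx0 hx1 (Nat.floor_le ht)

theorem pow_div_le_alphaKant_coeff (i j : ℕ) {c x : ℝ} (hx : x < 1) (hc : 0 ≤ c)
    (hcj : c ≤ (j + 1) * (1 - x)) :
    c ^ (i + 1) / ((1 - x) * i !) ≤ (i + 1) * (i + j + 1).choose j * (1 - x) ^ i := by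
  have h1x : 0 < 1 - x := sub_pos.2 hx
  have hchoose : ((j : ℝ) + 1) ^ (i + 1) ≤ (i + 1)! * (i + j + 1).choose j := by
    exact_mod_cast Nat.succ_pow_le_factorial_mul_choose i j
  rw [div_le_iff₀ (by positivity)]
  calc c ^ (i + 1) ≤ ((j + 1) * (1 - x)) ^ (i + 1) := pow_le_pow_left₀ hc hcj _
    _ = (j + 1) ^ (i + 1) * (1 - x) ^ (i + 1) := mul_pow _ _ _
    _ ≤ (i + 1)! * (i + j + 1).choose j * (1 - x) ^ (i + 1) := by gcongr
    _ = (i + 1) * (i + j + 1).choose j * (1 - x) ^ i * ((1 - x) * i !) := by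
      push_cast [Nat.factorial_succ]
      ring

theorem alphaKant_max_lower_bound_general (i : ℕ) (x : ℝ)
    (hx1 : 1/((i:ℝ)+2) < x) (hx2 : x < 1) :
    ((((i:ℝ)+2)*x - 1)^(i+1)) / ((1-x) * (Nat.factorial i : ℝ)) *
        x ^ ((((i:ℝ)+1)*x)/(1-x))
      ≤ alphaKant i (Nat.floor (((i:ℝ)+1)*x/(1-x))) x := by
  have hx0 : 0 < x := lt_trans (by positivity) hx1
  have h1x : 0 < 1 - x := sub_pos.2 hx2
  have hc : 0 ≤ ((i:ℝ)+2)*x - 1 := by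
    rw [div_lt_iff₀ (by positivity)] at hx1
    linarith
  have hcj : ((i:ℝ)+2)*x - 1 ≤ (⌊((i:ℝ)+1)*x/(1-x)⌋₊ + 1) * (1 - x) := by
    linarith [le_natFloor_div_add_one_mul (s := ((i:ℝ)+1)*x) h1x]
  exact mul_le_mul (pow_div_le_alphaKant_coeff i _ hx2 hc hcj)
    (Real.rpow_le_pow_natFloor hx0 hx2.le (by positivity)) (by positivity) (by positivity)

/-- Lower bound for the maximal value of `α_j(x)`: with `j_max = ⌊(i+1)x/(1−x)⌋`,
`α_{j_max}(x) ≥ ((i+2)x − 1)^{i+1} / ((1−x) i!) · x^{(i+1)x/(1−x)}` for `1/(i+2) < x < 1`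
(the last power is a real exponent). -/
theorem alphaKant_max_lower_bound (i : ℕ) (hi : 1 ≤ i) (x : ℝ)
    (hx1 : 1/((i:ℝ)+2) < x) (hx2 : x < 1) :
    ((((i:ℝ)+2)*x - 1)^(i+1)) / ((1-x) * (Nat.factorial i : ℝ)) *
        x ^ ((((i:ℝ)+1)*x)/(1-x))
      ≤ alphaKant i (Nat.floor (((i:ℝ)+1)*x/(1-x))) x :=
  alphaKant_max_lower_bound_general i x hx1 hx2
end

section
/- Fix an integer i ≥ 1 and let β_j(x) = binom(i+j−1, j)(1−x)^i x^j and let j_x be the unique nonnegative integer with x ∈ [j_x/(i+j_x), (j_x+1)/(i+j_x+1)). Then for every r ∈ (0,1) there exist a constant C > 0 and u ∈ (0,1) such that Σ_{j=⌊(1−r) j_x⌋}^{j_x} β_j(x) ≥ C for all x ∈ (u, 1). -/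
open Filter Set

/-- `β_j(x) = binom(i+j−1, j)(1−x)^i x^j`, i.e. `T̂_i'δ_x([j/(i+j), (j+1)/(i+j+1)))`. -/
noncomputable def betaKant (i j : ℕ) (x : ℝ) : ℝ :=
  (Nat.choose (i + j - 1) j : ℝ) * (1-x)^i * x^j

lemma pow_le_fact_mul_choose (j k : ℕ) : j ^ k ≤ Nat.factorial k * (j + k).choose k :=
  le_trans (Nat.pow_le_pow_left (Nat.le_succ j) k)
    (le_of_le_of_eq (Nat.pow_succ_le_ascFactorial (j+1) k)
      (Nat.ascFactorial_eq_factorial_mul_choose j k))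

/-- The block sums `Σ_{j=⌊(1−r)j_x⌋}^{j_x} β_j(x)` are uniformly bounded away from `0`
for `x` close enough to `1⁻`. Here `jx` is the (unique) index with
`x ∈ [j_x/(i+j_x), (j_x+1)/(i+j_x+1))`. -/
theorem betaKant_block_sum_lower_bound (i : ℕ) (hi : 1 ≤ i)
    (r : ℝ) (hr : r ∈ Set.Ioo (0:ℝ) 1)
    (jx : ℝ → ℕ)
    (hjx : ∀ x ∈ Set.Ico (0:ℝ) 1,
      x ∈ Set.Ico ((jx x : ℝ)/((i:ℝ)+(jx x : ℝ))) (((jx x : ℝ)+1)/((i:ℝ)+(jx x : ℝ)+1))) :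
    ∃ C > 0, ∃ u ∈ Set.Ioo (0:ℝ) 1, ∀ x ∈ Set.Ioo u 1,
      C ≤ ∑ j ∈ Finset.Icc (Nat.floor ((1-r) * (jx x : ℝ))) (jx x), betaKant i j x := by
  obtain ⟨hr0, hr1⟩ := hr
  have h1r : (0:ℝ) < 1 - r := by linarith
  have hi1 : (1:ℝ) ≤ (i:ℝ) := by exact_mod_cast hi
  set N : ℕ := ⌈(2:ℝ)/(1-r)⌉₊ + 1 with hNdef
  have hN2 : (2:ℝ)/(1-r) ≤ (N:ℝ) := by
    have := Nat.le_ceil ((2:ℝ)/(1-r))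
    push_cast [hNdef]
    linarith
  clear_value N
  set B : ℝ := ((1-r)/2)^(i-1) * ((i:ℝ)/4)^i * Real.exp (-(i:ℝ)) / Nat.factorial (i-1)
    with hBdef
  clear_value B
  have hBpos : 0 < B := by
    rw [hBdef]
    apply div_pos
    · apply mul_pos (mul_pos (pow_pos (by linarith) _) (pow_pos (by linarith) _))
        (Real.exp_pos _)
    · exact_mod_cast Nat.factorial_pos (i-1)
  set u : ℝ := max (1/2) (1 - 1/(2*((N:ℝ)+1))) with hudef
  have hN1pos : (0:ℝ) < 2*((N:ℝ)+1) := by positivity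
  refine ⟨r * B, mul_pos hr0 hBpos, u, ⟨lt_of_lt_of_le (by norm_num) (le_max_left _ _),
      max_lt (by norm_num) (by
        have : (0:ℝ) < 1/(2*((N:ℝ)+1)) := by positivity
        linarith)⟩, ?_⟩
  rintro x ⟨hxu, hx1⟩
  have hxhalf : (1/2:ℝ) < x := lt_of_le_of_lt (le_max_left _ _) hxu
  have hx0 : (0:ℝ) < x := by linarith
  have h1x0 : (0:ℝ) < 1 - x := by linarith
  have hxN : 1 - x < 1/(2*((N:ℝ)+1)) := by
    have := le_max_right (1/2:ℝ) (1 - 1/(2*((N:ℝ)+1)))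
    rw [← hudef] at this
    linarith
  obtain ⟨hL, hR⟩ := hjx x ⟨hx0.le, hx1⟩
  set J := jx x with hJdef
  clear_value J
  have hiJ : (0:ℝ) < (i:ℝ) + J := by positivity
  have hiJ1 : (0:ℝ) < (i:ℝ) + J + 1 := by positivity
  have hL' : (J:ℝ) ≤ x * ((i:ℝ) + J) := by
    rw [div_le_iff₀ hiJ] at hL; linarith
  have hR' : x * ((i:ℝ) + J + 1) < (J:ℝ) + 1 := by
    rw [lt_div_iff₀ hiJ1] at hR; linarith
  have h1x : x * (i:ℝ) < ((J:ℝ)+1) * (1-x) := by nlinarith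
  have hxi : (1/2:ℝ) ≤ x * (i:ℝ) := by
    have : x * 1 ≤ x * (i:ℝ) := mul_le_mul_of_nonneg_left hi1 hx0.le
    linarith
  -- J is large
  have hJN : (N:ℝ) < (J:ℝ) := by
    by_contra h
    push_neg at h
    have h2 : ((J:ℝ)+1) * (1-x) < ((N:ℝ)+1) * (1/(2*((N:ℝ)+1))) := by
      apply mul_lt_mul' (by linarith) hxN h1x0.le (by positivity)
    have h3 : ((N:ℝ)+1) * (1/(2*((N:ℝ)+1))) = 1/2 := by field_simp
    linarith
  have hJ1n : 1 ≤ J := by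
    have : (1:ℝ) ≤ (N:ℝ) := by exact_mod_cast Nat.one_le_iff_ne_zero.mpr (by omega)
    exact_mod_cast Nat.one_le_iff_ne_zero.mpr (by
      intro h; rw [h] at hJN; push_cast at hJN; linarith)
  have hJpos : (0:ℝ) < (J:ℝ) := by exact_mod_cast hJ1n
  have hJne : (J:ℝ) ≠ 0 := ne_of_gt hJpos
  have hJ2 : (2:ℝ) ≤ (1-r) * J := by
    have : (2:ℝ)/(1-r) ≤ (J:ℝ) := by linarith
    rw [div_le_iff₀ h1r] at this
    linarith
  set m := Nat.floor ((1-r) * (J:ℝ)) with hmdef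
  have hm_le : (m:ℝ) ≤ (1-r) * J := Nat.floor_le (by positivity)
  have hm_ge : (1-r) * (J:ℝ) - 1 ≤ (m:ℝ) := by
    have := Nat.lt_floor_add_one ((1-r) * (J:ℝ))
    rw [← hmdef] at this
    linarith
  clear_value m
  have hm2 : (1-r)/2 * (J:ℝ) ≤ (m:ℝ) := by
    have e : (1-r)/2 * (J:ℝ) = ((1-r) * J)/2 := by ring
    rw [e]; linarith
  have hmJ : m ≤ J := by
    have e : (1-r) * (J:ℝ) = J - r * J := by ring
    have hrJ : 0 < r * (J:ℝ) := mul_pos hr0 hJpos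
    have : (m:ℝ) ≤ (J:ℝ) := by linarith [hm_le, e ▸ hm_le]
    exact_mod_cast this
  -- key pointwise bounds
  have hxJ : Real.exp (-(i:ℝ)) ≤ x ^ J := by
    have h1 : ((i:ℝ)+J)/J ≤ Real.exp ((i:ℝ)/J) := by
      have := Real.add_one_le_exp ((i:ℝ)/J)
      rw [add_div, div_self hJne]
      linarith
    have h2 : (((i:ℝ)+J)/J)^J ≤ Real.exp ((i:ℝ)/J) ^ J :=
      pow_le_pow_left₀ (by positivity) h1 J
    have h3 : Real.exp ((i:ℝ)/J) ^ J = Real.exp (i:ℝ) := by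
      rw [← Real.exp_nat_mul]
      congr 1
      field_simp
    have h4 : ((i:ℝ)+J)^J ≤ Real.exp (i:ℝ) * (J:ℝ)^J := by
      have := h2
      rw [h3, div_pow, div_le_iff₀ (by positivity)] at this
      linarith [this]
    have h5 : Real.exp (-(i:ℝ)) ≤ ((J:ℝ)/((i:ℝ)+J))^J := by
      rw [div_pow, le_div_iff₀ (pow_pos hiJ J)]
      calc Real.exp (-(i:ℝ)) * ((i:ℝ)+J)^J
          ≤ Real.exp (-(i:ℝ)) * (Real.exp (i:ℝ) * (J:ℝ)^J) :=
            mul_le_mul_of_nonneg_left h4 (Real.exp_pos _).le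
        _ = (J:ℝ)^J := by
            rw [Real.exp_neg, ← mul_assoc, inv_mul_cancel₀ (ne_of_gt (Real.exp_pos _)),
              one_mul]
    calc Real.exp (-(i:ℝ)) ≤ ((J:ℝ)/((i:ℝ)+J))^J := h5
      _ ≤ x ^ J := pow_le_pow_left₀ (by positivity) hL J
  have h1xb : (i:ℝ)/(4*J) ≤ 1 - x := by
    have hJ1 : (J:ℝ)+1 ≤ 2*J := by
      have hJ1r : (1:ℝ) ≤ (J:ℝ) := by exact_mod_cast hJ1n
      linarith
    have h2 : ((J:ℝ)+1)*(1-x) ≤ 2*J*(1-x) := mul_le_mul_of_nonneg_right hJ1 h1x0.le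
    rw [div_le_iff₀ (by positivity)]
    linarith [mul_le_mul_of_nonneg_left (by linarith : (1/2:ℝ) ≤ x)
      (by linarith : (0:ℝ) ≤ (i:ℝ)), h1x, h2]
  -- per-term bound
  have hterm : ∀ j ∈ Finset.Icc m J, B / (J:ℝ) ≤ betaKant i j x := by
    intro j hj
    rw [Finset.mem_Icc] at hj
    have hjm : (m:ℝ) ≤ (j:ℝ) := by exact_mod_cast hj.1
    have hjJ : j ≤ J := hj.2
    have hjb : (1-r)/2 * (J:ℝ) ≤ (j:ℝ) := le_trans hm2 hjm
    have hchoose : ((j:ℝ))^(i-1) / (Nat.factorial (i-1) : ℝ) ≤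
        (Nat.choose (i + j - 1) j : ℝ) := by
      rw [div_le_iff₀ (by exact_mod_cast Nat.factorial_pos (i-1))]
      have hnat : j ^ (i-1) ≤ (i + j - 1).choose j * Nat.factorial (i-1) := by
        have h1 := pow_le_fact_mul_choose j (i-1)
        have h2 : i + j - 1 = j + (i-1) := by omega
        have h3 : (j + (i-1)).choose (i-1) = (j + (i-1)).choose j := by
          rw [← Nat.choose_symm (Nat.le_add_left _ _), Nat.add_sub_cancel]
        rw [h2]
        rw [h3] at h1
        exact h1.trans_eq (Nat.mul_comm _ _)
      exact_mod_cast hnat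
    have hxj : Real.exp (-(i:ℝ)) ≤ x ^ j :=
      le_trans hxJ (pow_le_pow_of_le_one hx0.le hx1.le hjJ)
    have h1xi : ((i:ℝ)/(4*J))^i ≤ (1-x)^i := pow_le_pow_left₀ (by positivity) h1xb i
    have hA : ((j:ℝ))^(i-1) / (Nat.factorial (i-1) : ℝ) * ((i:ℝ)/(4*J))^i *
        Real.exp (-(i:ℝ)) ≤ betaKant i j x := by
      unfold betaKant
      have hc0 : (0:ℝ) ≤ (Nat.choose (i + j - 1) j : ℝ) := Nat.cast_nonneg _
      exact mul_le_mul (mul_le_mul hchoose h1xi (by positivity) hc0) hxj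
        (Real.exp_pos _).le (mul_nonneg hc0 (pow_nonneg h1x0.le i))
    refine le_trans ?_ hA
    -- B / J = ((1-r)/2 * J)^(i-1)/(i-1)! * (i/(4J))^i * exp(-i)
    have hJpow : (J:ℝ)^(i-1) * ((1:ℝ)/J)^i = 1/J := by
      obtain ⟨k, rfl⟩ : ∃ k, i = k+1 := ⟨i-1, by omega⟩
      simp only [Nat.add_sub_cancel, pow_succ]
      field_simp
      rw [one_div, inv_pow, mul_inv_cancel₀ (pow_ne_zero _ hJne)]
    have hKid : B / (J:ℝ) = (((1-r)/2 * (J:ℝ))^(i-1) / (Nat.factorial (i-1) : ℝ)) *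
        ((i:ℝ)/(4*J))^i * Real.exp (-(i:ℝ)) := by
      have h4 : ((i:ℝ)/(4*J))^i = ((i:ℝ)/4)^i * ((1:ℝ)/J)^i := by
        rw [← mul_pow]; congr 1; field_simp
      calc B / (J:ℝ)
          = (((1-r)/2)^(i-1) * ((i:ℝ)/4)^i * Real.exp (-(i:ℝ)) /
              (Nat.factorial (i-1) : ℝ)) * ((J:ℝ)^(i-1) * ((1:ℝ)/J)^i) := by
            rw [hJpow, hBdef]; ring
        _ = (((1-r)/2 * (J:ℝ))^(i-1) / (Nat.factorial (i-1) : ℝ)) *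
              (((i:ℝ)/4)^i * ((1:ℝ)/J)^i) * Real.exp (-(i:ℝ)) := by
            rw [mul_pow]; ring
        _ = _ := by rw [h4]
    rw [hKid]
    gcongr
  -- assemble
  have hcard : ((Finset.Icc m J).card : ℝ) = (J:ℝ) + 1 - m := by
    rw [Nat.card_Icc]
    push_cast [Nat.cast_sub (le_trans hmJ (Nat.le_succ J))]
    ring
  have hsum := Finset.card_nsmul_le_sum (Finset.Icc m J) (betaKant i · x) (B / (J:ℝ)) hterm
  rw [nsmul_eq_mul, hcard] at hsum
  have hcard_ge : r * (J:ℝ) ≤ (J:ℝ) + 1 - m := by linarith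
  have hrB : r * B = (r * (J:ℝ)) * (B / (J:ℝ)) := by field_simp
  calc r * B = (r * (J:ℝ)) * (B / (J:ℝ)) := hrB
    _ ≤ ((J:ℝ) + 1 - m) * (B / (J:ℝ)) :=
        mul_le_mul_of_nonneg_right hcard_ge (by positivity)
    _ ≤ _ := hsum
end

section
/- For every integer i ≥ 1 there exist ε > 0 and u ∈ (0,1) such that ‖(T̂_i'^2 δ_x) ∧ (T̂_i' δ_x)‖_TV ≥ ε for all x ∈ (u, 1); consequently sup_{x ∈ (u,1]} ‖T̂_i'^2 δ_x − T̂_i' δ_x‖_TV ≤ 2 − 2ε < 2, i.e. there is an open neighbourhood U of the point 1 in [0,1] with sup_{x∈U} ‖T̂_i'^2 δ_x − T̂_i' δ_x‖_TV < 2. -/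
open MeasureTheory Filter Set
open scoped ENNReal

/-- The transition probability `T̂_i'δ_x` of the generalized Kantorovich operator. -/
noncomputable def kantTrans (i : ℕ) (x : ℝ) : Measure ℝ :=
  if x = 1 then Measure.dirac 1
  else (volume.restrict (Set.Ico (0:ℝ) 1)).withDensity
    (fun y => ENNReal.ofReal (kantKernel i x y))

/-- The total variation norm of a difference of measures,
`‖μ − ν‖_TV = sup {|∫ f dμ − ∫ f dν| : f continuous, ‖f‖_∞ ≤ 1}`. -/
noncomputable def tvDist (μ ν : Measure ℝ) : ℝ :=
  sSup { r : ℝ | ∃ f : BoundedContinuousFunction ℝ ℝ, ‖f‖ ≤ 1 ∧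
    r = |(∫ y, f y ∂μ) - ∫ y, f y ∂ν| }

namespace KantAux

noncomputable def kCoef (i j : ℕ) (x : ℝ) : ℝ :=
  ((i : ℝ) + 1) * (1 - x) ^ i * (Nat.choose (i + j + 1) j : ℝ) * x ^ j

def kIco (i j : ℕ) : Set ℝ :=
  Set.Ico ((j : ℝ) / ((i : ℝ) + j)) (((j : ℝ) + 1) / ((i : ℝ) + (j : ℝ) + 1))

noncomputable def kF (i : ℕ) (x y : ℝ) : ℝ≥0∞ :=
  ∑' j : ℕ, ENNReal.ofReal (kCoef i j x * Set.indicator (kIco i j) (fun _ => (1:ℝ)) y)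

noncomputable def kantConst (i : ℕ) : ℝ :=
  ((i:ℝ)+1) * (i:ℝ)^(i+1) * Real.exp (-(8*(i:ℝ))) / (2^(i+1) * ((i+1).factorial : ℝ))

variable {i : ℕ}

lemma frac_mono (hi : 1 ≤ i) {a b : ℕ} (hab : a ≤ b) :
    (a : ℝ) / ((i : ℝ) + a) ≤ (b : ℝ) / ((i : ℝ) + b) := by
  have hi1 : (1:ℝ) ≤ i := by exact_mod_cast hi
  have ha : (0:ℝ) < (i:ℝ) + a := by positivity
  have hb : (0:ℝ) < (i:ℝ) + b := by positivity
  have hab' : (a:ℝ) ≤ b := by exact_mod_cast hab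
  rw [div_le_div_iff₀ ha hb]
  nlinarith

lemma kIco_subset (hi : 1 ≤ i) (j : ℕ) : kIco i j ⊆ Set.Ico (0:ℝ) 1 := by
  have hi1 : (1:ℝ) ≤ i := by exact_mod_cast hi
  intro y hy
  obtain ⟨h1, h2⟩ := hy
  constructor
  · exact le_trans (by positivity) h1
  · refine lt_of_lt_of_le h2 ?_
    rw [div_le_one (by positivity)]
    linarith

lemma kIco_disj (hi : 1 ≤ i) {j k : ℕ} (hjk : j ≠ k) {y : ℝ} (hy : y ∈ kIco i j) :
    y ∉ kIco i k := by
  intro hyk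
  rcases hjk.lt_or_gt with h | h
  · -- j < k : y < (j+1)/(i+j+1) ≤ k/(i+k) ≤ y
    have h1 : ((j:ℝ) + 1) / ((i:ℝ) + j + 1) ≤ (k : ℝ) / ((i:ℝ) + k) := by
      have := frac_mono (i := i) hi (a := j+1) (b := k) h
      push_cast at this
      convert this using 2 <;> ring
    have := hy.2
    have := hyk.1
    linarith
  · have h1 : ((k:ℝ) + 1) / ((i:ℝ) + k + 1) ≤ (j : ℝ) / ((i:ℝ) + j) := by
      have := frac_mono (i := i) hi (a := k+1) (b := j) h
      push_cast at this
      convert this using 2 <;> ring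
    have := hyk.2
    have := hy.1
    linarith

lemma mem_kIco_floor (hi : 1 ≤ i) {z : ℝ} (hz0 : 0 ≤ z) (hz1 : z < 1) :
    z ∈ kIco i (⌊(i : ℝ) * z / (1 - z)⌋₊) := by
  have hi1 : (1:ℝ) ≤ i := by exact_mod_cast hi
  have h1z : (0:ℝ) < 1 - z := by linarith
  set a : ℝ := (i : ℝ) * z / (1 - z) with ha
  have ha0 : 0 ≤ a := by positivity
  set j := ⌊a⌋₊ with hj
  have hfl : (j : ℝ) ≤ a := Nat.floor_le ha0
  have hfu : a < (j : ℝ) + 1 := Nat.lt_floor_add_one a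
  have hiz : (j : ℝ) * (1 - z) ≤ (i:ℝ) * z := by
    have := mul_le_mul_of_nonneg_right hfl h1z.le
    rwa [div_mul_cancel₀ _ h1z.ne'] at this
  have hiz2 : (i:ℝ) * z < ((j : ℝ) + 1) * (1 - z) := by
    have := mul_lt_mul_of_pos_right hfu h1z
    rwa [div_mul_cancel₀ _ h1z.ne'] at this
  constructor
  · rw [div_le_iff₀ (by positivity)]
    nlinarith
  · rw [lt_div_iff₀ (by positivity)]
    nlinarith

lemma ofReal_kantKernel (hi : 1 ≤ i) (x y : ℝ) :
    ENNReal.ofReal (kantKernel i x y) = kF i x y := by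
  by_cases hex : ∃ j, y ∈ kIco i j
  · obtain ⟨j, hj⟩ := hex
    have h1 : kantKernel i x y = kCoef i j x := by
      rw [kantKernel]
      rw [tsum_eq_single j ?_]
      · rw [show Set.Ico ((j : ℝ) / ((i : ℝ) + j)) (((j : ℝ) + 1) / ((i : ℝ) + (j : ℝ) + 1))
            = kIco i j from rfl, Set.indicator_of_mem hj]
        rw [kCoef]; ring
      · intro b hb
        rw [show Set.Ico ((b : ℝ) / ((i : ℝ) + b)) (((b : ℝ) + 1) / ((i : ℝ) + (b : ℝ) + 1))
            = kIco i b from rfl, Set.indicator_of_notMem (kIco_disj hi (Ne.symm hb) hj)]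
        ring
    have h2 : kF i x y = ENNReal.ofReal (kCoef i j x) := by
      rw [kF, tsum_eq_single j ?_]
      · rw [Set.indicator_of_mem hj, mul_one]
      · intro b hb
        rw [Set.indicator_of_notMem (kIco_disj hi (Ne.symm hb) hj), mul_zero,
          ENNReal.ofReal_zero]
    rw [h1, h2]
  · push_neg at hex
    have h1 : kantKernel i x y = 0 := by
      rw [kantKernel]
      have : ∀ b : ℕ, (Nat.choose (i + b + 1) b : ℝ) * x ^ b *
          Set.indicator (Set.Ico ((b : ℝ) / ((i : ℝ) + b)) (((b : ℝ) + 1) / ((i : ℝ) + (b : ℝ) + 1)))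
            (fun _ => (1 : ℝ)) y = 0 := by
        intro b
        rw [show Set.Ico ((b : ℝ) / ((i : ℝ) + b)) (((b : ℝ) + 1) / ((i : ℝ) + (b : ℝ) + 1))
            = kIco i b from rfl, Set.indicator_of_notMem (hex b)]
        ring
      simp only [this, tsum_zero, mul_zero]
    have h2 : kF i x y = 0 := by
      rw [kF]
      have : ∀ b : ℕ, ENNReal.ofReal (kCoef i b x * Set.indicator (kIco i b) (fun _ => (1:ℝ)) y)
          = 0 := by
        intro b
        rw [Set.indicator_of_notMem (hex b), mul_zero, ENNReal.ofReal_zero]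
      simp only [this, tsum_zero]
    rw [h1, h2, ENNReal.ofReal_zero]

lemma kantTrans_eq (hi : 1 ≤ i) {x : ℝ} (hx : x ≠ 1) :
    kantTrans i x = (volume.restrict (Set.Ico (0:ℝ) 1)).withDensity (kF i x) := by
  rw [kantTrans, if_neg hx]
  congr 1
  funext y
  exact ofReal_kantKernel hi x y

lemma measurable_kF : Measurable (fun p : ℝ × ℝ => kF i p.1 p.2) := by
  apply Measurable.ennreal_tsum
  intro j
  apply ENNReal.measurable_ofReal.comp
  apply Measurable.mul
  · exact (((measurable_const.mul (((measurable_const.sub measurable_id).pow_const i))).mul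
      measurable_const).mul (measurable_id.pow_const j)).comp measurable_fst
  · exact ((measurable_const.indicator measurableSet_Ico)).comp measurable_snd

lemma measurable_kantTrans (hi : 1 ≤ i) : Measurable (kantTrans i) := by
  apply Measure.measurable_of_measurable_coe
  intro s hs
  have hrw : (fun x => kantTrans i x s)
      = fun x => if x = 1 then Measure.dirac (1:ℝ) s
        else ∫⁻ y in s, kF i x y ∂(volume.restrict (Set.Ico (0:ℝ) 1)) := by
    funext x
    by_cases hx : x = 1
    · simp [kantTrans, hx]
    · rw [kantTrans_eq hi hx, if_neg hx, withDensity_apply _ hs]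
  rw [hrw]
  apply Measurable.ite (by simp : MeasurableSet {x : ℝ | x = 1}) measurable_const
  exact Measurable.lintegral_prod_right measurable_kF

lemma choose_id_real (hi : 1 ≤ i) (j : ℕ) :
    ((i+j+1).choose j : ℝ) * ((i:ℝ) * ((i:ℝ)+1))
      = (((j + (i-1)).choose (i-1) : ℕ) : ℝ) * (((i:ℝ)+j) * ((i:ℝ)+j+1)) := by
  obtain ⟨m, rfl⟩ : ∃ m, i = m + 1 := ⟨i - 1, by omega⟩
  have e0 : m + 1 - 1 = m := by omega
  rw [e0]
  have e1 : m + 1 + j + 1 = j + (m + 2) := by omega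
  have e2 : (j + (m+2)).choose j = (j + (m+2)).choose (m+2) := Nat.choose_symm_add
  have h1 := Nat.add_one_mul_choose_eq (j+m) m
  have h2 := Nat.add_one_mul_choose_eq (j+m+1) (m+1)
  have h1' : ((j+m+1 : ℕ) : ℝ) * ((j+m).choose m : ℝ) = ((j+m+1).choose (m+1) : ℝ) * ((m+1:ℕ) : ℝ) := by
    exact_mod_cast congrArg (Nat.cast (R := ℝ)) h1
  have h2' : ((j+m+2 : ℕ) : ℝ) * ((j+m+1).choose (m+1) : ℝ) = ((j+m+2).choose (m+2) : ℝ) * ((m+2:ℕ) : ℝ) := by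
    exact_mod_cast congrArg (Nat.cast (R := ℝ)) h2
  rw [e1, e2]
  have e3 : (j + (m+2)).choose (m+2) = (j + m + 2).choose (m+2) := by ring_nf
  rw [e3]
  push_cast at h1' h2' ⊢
  linear_combination (-((j:ℝ)+m+2)) * h1' + (-((m:ℝ)+1)) * h2'

lemma kIco_len (hi : 1 ≤ i) (j : ℕ) :
    ((j:ℝ)+1)/((i:ℝ)+(j:ℝ)+1) - (j:ℝ)/((i:ℝ)+j)
      = (i:ℝ)/(((i:ℝ)+j)*((i:ℝ)+j+1)) := by
  have hi1 : (1:ℝ) ≤ i := by exact_mod_cast hi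
  have h1 : ((i:ℝ)+j) ≠ 0 := by positivity
  have h2 : ((i:ℝ)+j+1) ≠ 0 := by positivity
  field_simp
  ring

lemma measurable_kF_term (j : ℕ) (x : ℝ) :
    Measurable (fun y : ℝ => ENNReal.ofReal (kCoef i j x * Set.indicator (kIco i j) (fun _ => (1:ℝ)) y)) :=
  ENNReal.measurable_ofReal.comp (measurable_const.mul
    (measurable_const.indicator measurableSet_Ico))

lemma measurableSet_kIco (i j : ℕ) : MeasurableSet (kIco i j) := measurableSet_Ico

lemma coef_mul_len (hi : 1 ≤ i) (x : ℝ) (j : ℕ) :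
    kCoef i j x * ((i:ℝ)/(((i:ℝ)+j)*((i:ℝ)+j+1)))
      = (1-x)^i * (((j + (i-1)).choose (i-1) : ℕ) : ℝ) * x^j := by
  have hi1 : (1:ℝ) ≤ i := by exact_mod_cast hi
  have h1 : ((i:ℝ)+j) ≠ 0 := by positivity
  have h2 : ((i:ℝ)+j+1) ≠ 0 := by positivity
  have hid := choose_id_real hi j
  rw [kCoef]
  field_simp
  linear_combination ((1-x)^i * x^j) * hid

lemma kCoef_nonneg {x : ℝ} (hx0 : 0 ≤ x) (hx1 : x ≤ 1) (j : ℕ) : 0 ≤ kCoef i j x := by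
  rw [kCoef]
  have h1 : (0:ℝ) ≤ 1 - x := by linarith
  positivity

lemma mass (hi : 1 ≤ i) {x : ℝ} (hx : x ∈ Set.Ico (0:ℝ) 1) : kantTrans i x Set.univ = 1 := by
  have hx1 : x ≠ 1 := ne_of_lt hx.2
  have hnorm : ‖x‖ < 1 := by rw [Real.norm_eq_abs, abs_lt]; exact ⟨by linarith [hx.1], hx.2⟩
  have h1x : (0:ℝ) < 1 - x := by linarith [hx.2]
  rw [kantTrans_eq hi hx1, withDensity_apply _ MeasurableSet.univ, Measure.restrict_univ]
  simp only [kF]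
  rw [lintegral_tsum (fun j => (measurable_kF_term j x).aemeasurable)]
  set q : ℕ → ℝ := fun j => (1-x)^i * (((j + (i-1)).choose (i-1) : ℕ) : ℝ) * x^j with hq
  have hterm : ∀ j : ℕ, ∫⁻ y, ENNReal.ofReal (kCoef i j x * Set.indicator (kIco i j) (fun _ => (1:ℝ)) y)
      ∂(volume.restrict (Set.Ico (0:ℝ) 1)) = ENNReal.ofReal (q j) := by
    intro j
    have hind : (fun y : ℝ => ENNReal.ofReal (kCoef i j x * Set.indicator (kIco i j) (fun _ => (1:ℝ)) y))
        = Set.indicator (kIco i j) (fun _ => ENNReal.ofReal (kCoef i j x)) := by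
      funext y
      by_cases h : y ∈ kIco i j
      · simp [Set.indicator_of_mem h]
      · simp [Set.indicator_of_notMem h]
    rw [hind, lintegral_indicator (measurableSet_kIco i j), setLIntegral_const,
      Measure.restrict_apply (measurableSet_kIco i j),
      Set.inter_eq_self_of_subset_left (kIco_subset hi j)]
    rw [show kIco i j = Set.Ico ((j : ℝ) / ((i : ℝ) + j)) (((j : ℝ) + 1) / ((i : ℝ) + (j : ℝ) + 1)) from rfl,
      Real.volume_Ico, ← ENNReal.ofReal_mul (kCoef_nonneg hx.1 hx.2.le j)]
    congr 1
    rw [kIco_len hi j, coef_mul_len hi x j]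
  simp only [hterm]
  have hnn : ∀ j, 0 ≤ q j := by
    intro j
    have : (0:ℝ) ≤ x := hx.1
    positivity
  have hsum0 : Summable (fun j : ℕ => (((j + (i-1)).choose (i-1) : ℕ) : ℝ) * x ^ j) :=
    summable_choose_mul_geometric_of_norm_lt_one (i-1) hnorm
  have hsum : Summable q := by
    have := hsum0.mul_left ((1-x)^i)
    apply this.congr
    intro j
    simp only [hq]; ring
  have htsum : ∑' j, q j = 1 := by
    have h1 : ∑' j, q j = (1-x)^i * ∑' j : ℕ, (((j + (i-1)).choose (i-1) : ℕ) : ℝ) * x ^ j := by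
      rw [← tsum_mul_left]
      apply tsum_congr
      intro j
      simp only [hq]; ring
    rw [h1, tsum_choose_mul_geometric_of_norm_lt_one (i-1) hnorm]
    have : i - 1 + 1 = i := by omega
    rw [this]
    field_simp
  rw [← ENNReal.ofReal_tsum_of_nonneg hnn hsum, htsum, ENNReal.ofReal_one]

lemma compl_zero (hi : 1 ≤ i) {x : ℝ} (hx : x ≠ 1) :
    kantTrans i x (Set.Ico (0:ℝ) 1)ᶜ = 0 := by
  rw [kantTrans_eq hi hx, withDensity_apply _ measurableSet_Ico.compl,
    Measure.restrict_restrict measurableSet_Ico.compl, compl_inter_self,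
    Measure.restrict_empty, lintegral_zero_measure]

lemma kantConst_pos (hi : 1 ≤ i) : 0 < kantConst i := by
  have hi1 : (1:ℝ) ≤ i := by exact_mod_cast hi
  have h0 : (0:ℝ) < (i:ℝ) := by linarith
  have hf : (0:ℝ) < ((i+1).factorial : ℝ) := by exact_mod_cast (i+1).factorial_pos
  rw [kantConst]
  positivity

lemma choose_lower (j : ℕ) :
    ((j:ℝ)+1)^(i+1) / ((i+1).factorial : ℝ) ≤ ((i+j+1).choose j : ℝ) := by
  have h1 : (j+1)^(i+1) ≤ (i+j+1).descFactorial (i+1) := by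
    have h := Nat.pow_sub_le_descFactorial (i+j+1) (i+1)
    have e : i+j+1+1 - (i+1) = j+1 := by omega
    rwa [e] at h
  have h2 : (i+j+1).descFactorial (i+1) = (i+1).factorial * (i+j+1).choose (i+1) :=
    Nat.descFactorial_eq_factorial_mul_choose _ _
  have h3 : (i+j+1).choose (i+1) = (i+j+1).choose j := by
    have e : i+j+1 = j + (i+1) := by omega
    rw [e, Nat.choose_symm_add]
  have h4 : (j+1)^(i+1) ≤ (i+1).factorial * (i+j+1).choose j := by rw [← h3, ← h2]; exact h1
  have hf : (0:ℝ) < ((i+1).factorial : ℝ) := by exact_mod_cast (i+1).factorial_pos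
  rw [div_le_iff₀ hf]
  calc ((j:ℝ)+1)^(i+1) = (((j+1)^(i+1) : ℕ) : ℝ) := by push_cast; ring
    _ ≤ (((i+1).factorial * (i+j+1).choose j : ℕ) : ℝ) := by exact_mod_cast h4
    _ = ((i+j+1).choose j : ℝ) * ((i+1).factorial : ℝ) := by push_cast; ring

lemma exp_le_one_sub {t : ℝ} (ht0 : 0 < t) (ht : t ≤ 1/2) : Real.exp (-(2*t)) ≤ 1 - t := by
  have h1 : (1:ℝ) + 2*t ≤ Real.exp (2*t) := by have := Real.add_one_le_exp (2*t); linarith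
  rw [Real.exp_neg, ← one_div, div_le_iff₀ (Real.exp_pos _)]
  nlinarith [Real.exp_pos (2*t)]

lemma coef_lower (hi : 1 ≤ i) {x z : ℝ} (hx1 : 1/2 ≤ x) (hx2 : x < 1)
    (hz1 : (1-x)/4 < 1-z) (hz2 : 1-z ≤ 1-x) :
    kantConst i / (1-x) ≤ kCoef i (⌊(i:ℝ) * z / (1-z)⌋₊) x := by
  have hi1 : (1:ℝ) ≤ i := by exact_mod_cast hi
  have hipos : (0:ℝ) < i := by linarith
  have ht0 : (0:ℝ) < 1 - x := by linarith
  have ht2 : 1 - x ≤ 1/2 := by linarith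
  have hw0 : (0:ℝ) < 1 - z := lt_trans (by linarith) hz1
  have hz0 : (0:ℝ) ≤ z := by linarith
  have hzlt : z < 1 := by linarith
  set t := 1 - x with htdef
  set j := ⌊(i:ℝ) * z / (1-z)⌋₊ with hjdef
  have harg : 0 ≤ (i:ℝ) * z / (1-z) := by positivity
  have hjle : (j:ℝ) ≤ (i:ℝ) * z / (1-z) := Nat.floor_le harg
  have hju : (i:ℝ) * z / (1-z) < (j:ℝ) + 1 := Nat.lt_floor_add_one _
  have hj4 : (j:ℝ) ≤ 4 * i / t := by
    calc (j:ℝ) ≤ (i:ℝ) * z / (1-z) := hjle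
      _ ≤ (i:ℝ) / (t/4) := by
          apply div_le_div₀ (by positivity) (by nlinarith) (by linarith) (by linarith)
      _ = 4 * i / t := by rw [div_div_eq_mul_div]; ring
  have hjl : (i:ℝ) / (2*t) ≤ (j:ℝ) + 1 := by
    have e : (i:ℝ) * z / (1-z) = (i:ℝ)/(1-z) - i := by field_simp; ring
    have h5 : (i:ℝ)/t ≤ (i:ℝ)/(1-z) := div_le_div_of_nonneg_left hipos.le hw0 hz2
    have key : (i:ℝ)/t - i - (i:ℝ)/(2*t) = i*(1-2*t)/(2*t) := by field_simp; ring
    have hnn : 0 ≤ i*(1-2*t)/(2*t) := by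
      apply div_nonneg _ (by linarith)
      nlinarith
    have : (i:ℝ)/(2*t) ≤ (i:ℝ)/t - i := by linarith
    linarith [e ▸ hju, h5]
  have hxe : Real.exp (-(8*(i:ℝ))) ≤ x ^ j := by
    have hex : Real.exp (-(2*t)) ≤ x := by
      have := exp_le_one_sub ht0 ht2
      linarith [this]
    have hj4' : t * (j:ℝ) ≤ 4 * i := by
      have h := mul_le_mul_of_nonneg_left hj4 ht0.le
      have h2 : t * (4 * (i:ℝ) / t) = 4 * i := by field_simp
      linarith [h2 ▸ h]
    calc Real.exp (-(8*(i:ℝ))) ≤ Real.exp ((j:ℝ) * (-(2*t))) := by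
          apply Real.exp_le_exp.2
          nlinarith [hj4']
      _ = Real.exp (-(2*t)) ^ j := Real.exp_nat_mul _ j
      _ ≤ x ^ j := pow_le_pow_left₀ (Real.exp_pos _).le hex j
  have hCl := choose_lower (i := i) j
  have hjp : (0:ℝ) ≤ (i:ℝ)/(2*t) := by positivity
  have hfpos : (0:ℝ) < ((i+1).factorial : ℝ) := by exact_mod_cast (i+1).factorial_pos
  calc kantConst i / t
      = ((i:ℝ)+1) * t^i * (((i:ℝ)/(2*t))^(i+1) / ((i+1).factorial : ℝ)) * Real.exp (-(8*(i:ℝ))) := by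
        rw [kantConst]
        rw [div_pow, mul_pow]
        field_simp
        ring
    _ ≤ ((i:ℝ)+1) * t^i * ((((j:ℝ)+1))^(i+1) / ((i+1).factorial : ℝ)) * Real.exp (-(8*(i:ℝ))) := by
        gcongr
    _ ≤ ((i:ℝ)+1) * t^i * ((i+j+1).choose j : ℝ) * Real.exp (-(8*(i:ℝ))) := by
        gcongr
    _ ≤ ((i:ℝ)+1) * t^i * ((i+j+1).choose j : ℝ) * x ^ j := by
        gcongr
    _ = kCoef i j x := by rw [kCoef, ← htdef]

lemma kF_lower (hi : 1 ≤ i) {x z : ℝ} (hx1 : 1/2 ≤ x) (hx2 : x < 1)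
    (hz1 : (1-x)/4 < 1-z) (hz2 : 1-z ≤ 1-x) :
    ENNReal.ofReal (kantConst i / (1-x)) ≤ kF i x z := by
  have hz0 : (0:ℝ) ≤ z := by linarith
  have hzlt : z < 1 := by linarith
  set j := ⌊(i:ℝ) * z / (1-z)⌋₊ with hjdef
  have hmem : z ∈ kIco i j := mem_kIco_floor hi hz0 hzlt
  have hterm : ENNReal.ofReal (kCoef i j x * Set.indicator (kIco i j) (fun _ => (1:ℝ)) z)
      ≤ kF i x z := ENNReal.le_tsum j
  rw [Set.indicator_of_mem hmem, mul_one] at hterm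
  exact le_trans (ENNReal.ofReal_le_ofReal (coef_lower hi hx1 hx2 hz1 hz2)) hterm

lemma trans_lower (hi : 1 ≤ i) {x : ℝ} (hx1 : 1/2 ≤ x) (hx2 : x < 1) {S : Set ℝ}
    (hS : MeasurableSet S) (hsub : ∀ z ∈ S, (1-x)/4 < 1-z ∧ 1-z ≤ 1-x) :
    ENNReal.ofReal (kantConst i / (1-x)) * volume S ≤ kantTrans i x S := by
  have hS01 : S ⊆ Set.Ico (0:ℝ) 1 := by
    intro z hz
    obtain ⟨h1, h2⟩ := hsub z hz
    exact ⟨by linarith, by linarith⟩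
  rw [kantTrans_eq hi (ne_of_lt hx2), withDensity_apply _ hS,
    Measure.restrict_restrict hS, Set.inter_eq_self_of_subset_left hS01]
  calc ENNReal.ofReal (kantConst i / (1-x)) * volume S
      = ∫⁻ _ in S, ENNReal.ofReal (kantConst i / (1-x)) ∂volume := (setLIntegral_const _ _).symm
    _ ≤ ∫⁻ z in S, kF i x z ∂volume := by
        apply lintegral_mono_ae
        filter_upwards [ae_restrict_mem hS] with z hz
        exact kF_lower hi hx1 hx2 (hsub z hz).1 (hsub z hz).2

lemma bind_lower (hi : 1 ≤ i) {x : ℝ} (hx1 : 1/2 < x) (hx2 : x < 1) {S : Set ℝ}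
    (hS : MeasurableSet S) :
    ENNReal.ofReal (kantConst i / (1-x)) * ENNReal.ofReal (kantConst i / 2)
      * volume (S ∩ Set.Ico (1-(1-x)/2) (1-(1-x)/4))
      ≤ (kantTrans i x).bind (kantTrans i) S := by
  have hc0 : 0 < kantConst i := kantConst_pos hi
  set t := 1 - x with htdef
  have ht0 : (0:ℝ) < t := by rw [htdef]; linarith
  have ht2 : t ≤ 1/2 := by rw [htdef]; linarith
  set B := S ∩ Set.Ico (1-t/2) (1-t/4) with hBdef
  have hBm : MeasurableSet B := hS.inter measurableSet_Ico
  set A := Set.Ico x (1-t/2) with hAdef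
  have hAm : MeasurableSet A := measurableSet_Ico
  rw [Measure.bind_apply hS (measurable_kantTrans hi).aemeasurable]
  have inner : ∀ y ∈ A, ENNReal.ofReal (kantConst i / t) * volume B ≤ kantTrans i y S := by
    intro y hy
    obtain ⟨hy1, hy2⟩ := hy
    have hyx : x = 1 - t := by rw [htdef]; ring
    have hyt : t/2 < 1-y := by linarith
    have hyt2 : 1-y ≤ t := by rw [hyx] at hy1; linarith
    have h12 : 1/2 ≤ y := le_trans hx1.le hy1
    have hylt : y < 1 := by linarith
    have hB' : ∀ z ∈ B, (1-y)/4 < 1-z ∧ 1-z ≤ 1-y := by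
      intro z hz
      obtain ⟨hz1, hz2⟩ := hz.2
      exact ⟨by linarith, by linarith⟩
    have h1 := trans_lower hi h12 hylt hBm hB'
    have h2 : kantTrans i y B ≤ kantTrans i y S :=
      measure_mono Set.inter_subset_left
    refine le_trans ?_ (le_trans h1 h2)
    apply mul_le_mul_left
    apply ENNReal.ofReal_le_ofReal
    exact div_le_div_of_nonneg_left hc0.le (by linarith) hyt2
  have hνA : ENNReal.ofReal (kantConst i / t) * ENNReal.ofReal (t/2) ≤ kantTrans i x A := by
    have hA' : ∀ z ∈ A, (1-x)/4 < 1-z ∧ 1-z ≤ 1-x := by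
      intro z hz
      obtain ⟨hz1, hz2⟩ := hz
      rw [← htdef]
      constructor
      · linarith
      · rw [htdef]; linarith
    have h1 := trans_lower hi hx1.le hx2 hAm hA'
    rw [← htdef] at h1
    have hvol : volume A = ENNReal.ofReal (t/2) := by
      rw [hAdef, Real.volume_Ico]
      congr 1
      rw [htdef]; ring
    rwa [hvol] at h1
  calc ENNReal.ofReal (kantConst i / t) * ENNReal.ofReal (kantConst i / 2) * volume B
      = (ENNReal.ofReal (kantConst i / t) * volume B)
        * (ENNReal.ofReal (kantConst i / t) * ENNReal.ofReal (t/2)) := by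
        have hh : ENNReal.ofReal (kantConst i / t) * ENNReal.ofReal (t/2)
            = ENNReal.ofReal (kantConst i / 2) := by
          rw [← ENNReal.ofReal_mul (by positivity)]
          congr 1
          field_simp
        rw [hh]
        ring
    _ ≤ (ENNReal.ofReal (kantConst i / t) * volume B) * kantTrans i x A := by
        exact mul_le_mul_right hνA _
    _ ≤ ∫⁻ y in A, kantTrans i y S ∂(kantTrans i x) := by
        rw [mul_comm]
        calc kantTrans i x A * (ENNReal.ofReal (kantConst i / t) * volume B)
            = ∫⁻ _ in A, (ENNReal.ofReal (kantConst i / t) * volume B) ∂(kantTrans i x) := by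
              rw [setLIntegral_const]; ring
          _ ≤ ∫⁻ y in A, kantTrans i y S ∂(kantTrans i x) := by
              apply lintegral_mono_ae
              filter_upwards [ae_restrict_mem hAm] with y hy
              exact inner y hy
    _ ≤ ∫⁻ y, kantTrans i y S ∂(kantTrans i x) := setLIntegral_le_lintegral _ _

lemma bind_mass_le (hi : 1 ≤ i) {x : ℝ} (hx1 : 1/2 < x) (hx2 : x < 1) :
    (kantTrans i x).bind (kantTrans i) Set.univ ≤ 1 := by
  rw [Measure.bind_apply MeasurableSet.univ (measurable_kantTrans hi).aemeasurable]
  have hae : ∀ᵐ y ∂(kantTrans i x), y ∈ Set.Ico (0:ℝ) 1 := by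
    rw [ae_iff]
    exact compl_zero hi (ne_of_lt hx2)
  calc ∫⁻ y, kantTrans i y Set.univ ∂(kantTrans i x)
      ≤ ∫⁻ _, 1 ∂(kantTrans i x) :=
        lintegral_mono_ae (hae.mono fun y hy => le_of_eq (mass hi hy))
    _ = kantTrans i x Set.univ := lintegral_one
    _ ≤ 1 := le_of_eq (mass hi ⟨by linarith, hx2⟩)

lemma common_minorant (hi : 1 ≤ i) {x : ℝ} (hx1 : 1/2 < x) (hx2 : x < 1) :
    ∃ ρ : Measure ℝ, ρ ≤ (kantTrans i x).bind (kantTrans i) ∧ ρ ≤ kantTrans i x ∧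
      ENNReal.ofReal (min (kantConst i) (kantConst i * kantConst i / 2) / 4) ≤ ρ Set.univ := by
  have hc0 : 0 < kantConst i := kantConst_pos hi
  set c := kantConst i with hcdef
  set κ := min c (c*c/2) with hκdef
  have hκ0 : 0 < κ := lt_min hc0 (by positivity)
  have ht0 : (0:ℝ) < 1 - x := by linarith
  set B : Set ℝ := Set.Ico (1-(1-x)/2) (1-(1-x)/4) with hBdef
  have hBm : MeasurableSet B := measurableSet_Ico
  refine ⟨ENNReal.ofReal (κ/(1-x)) • volume.restrict B, ?_, ?_, ?_⟩
  · rw [Measure.le_iff]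
    intro s hs
    have h1 : (ENNReal.ofReal (κ/(1-x)) • volume.restrict B) s
        = ENNReal.ofReal (κ/(1-x)) * volume (s ∩ B) := by
      rw [Measure.smul_apply, Measure.restrict_apply hs, smul_eq_mul]
    rw [h1]
    refine le_trans ?_ (bind_lower hi hx1 hx2 hs)
    apply mul_le_mul_left
    have he : ENNReal.ofReal (c/(1-x)) * ENNReal.ofReal (c / 2)
        = ENNReal.ofReal ((c*c/2)/(1-x)) := by
      rw [← ENNReal.ofReal_mul (by positivity)]
      congr 1
      field_simp
    rw [he]
    apply ENNReal.ofReal_le_ofReal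
    exact (div_le_div_iff_of_pos_right ht0).2 (min_le_right _ _)
  · rw [Measure.le_iff]
    intro s hs
    have h1 : (ENNReal.ofReal (κ/(1-x)) • volume.restrict B) s
        = ENNReal.ofReal (κ/(1-x)) * volume (s ∩ B) := by
      rw [Measure.smul_apply, Measure.restrict_apply hs, smul_eq_mul]
    rw [h1]
    have hsub : ∀ z ∈ s ∩ B, (1-x)/4 < 1-z ∧ 1-z ≤ 1-x := by
      intro z hz
      obtain ⟨hz1, hz2⟩ := hz.2
      exact ⟨by linarith, by linarith⟩
    refine le_trans (le_trans ?_ (trans_lower hi hx1.le hx2 (hs.inter hBm) hsub))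
      (measure_mono Set.inter_subset_left)
    apply mul_le_mul_left
    apply ENNReal.ofReal_le_ofReal
    exact (div_le_div_iff_of_pos_right ht0).2 (min_le_left _ _)
  · have h1 : (ENNReal.ofReal (κ/(1-x)) • volume.restrict B) Set.univ
        = ENNReal.ofReal (κ/(1-x)) * volume B := by
      rw [Measure.smul_apply, Measure.restrict_apply_univ, smul_eq_mul]
    rw [h1, hBdef, Real.volume_Ico]
    have h2 : 1-(1-x)/4 - (1-(1-x)/2) = (1-x)/4 := by ring
    rw [h2, ← ENNReal.ofReal_mul (by positivity)]
    apply le_of_eq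
    congr 1
    field_simp

lemma tv_le_of_common (μ ν ρ : Measure ℝ) [IsFiniteMeasure μ] [IsFiniteMeasure ν]
    (hμ : μ Set.univ ≤ 1) (hν : ν Set.univ ≤ 1) (hρμ : ρ ≤ μ) (hρν : ρ ≤ ν)
    {ε : ℝ} (hε0 : 0 ≤ ε) (hε1 : ε ≤ 1) (hε : ENNReal.ofReal ε ≤ ρ Set.univ) :
    tvDist μ ν ≤ 2 - 2*ε := by
  haveI hρf : IsFiniteMeasure ρ := isFiniteMeasure_of_le μ hρμ
  apply Real.sSup_le _ (by linarith)
  rintro r ⟨f, hf, rfl⟩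
  haveI h1 : IsFiniteMeasure (μ - ρ) := isFiniteMeasure_of_le μ Measure.sub_le
  haveI h2 : IsFiniteMeasure (ν - ρ) := isFiniteMeasure_of_le ν Measure.sub_le
  have hdμ : ∫ y, f y ∂μ = ∫ y, f y ∂(μ - ρ) + ∫ y, f y ∂ρ := by
    rw [← integral_add_measure (f.integrable _) (f.integrable _),
      Measure.sub_add_cancel_of_le hρμ]
  have hdν : ∫ y, f y ∂ν = ∫ y, f y ∂(ν - ρ) + ∫ y, f y ∂ρ := by
    rw [← integral_add_measure (f.integrable _) (f.integrable _),
      Measure.sub_add_cancel_of_le hρν]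
  have hmass : ∀ (σ : Measure ℝ), σ Set.univ ≤ 1 → ρ ≤ σ → ((σ - ρ) Set.univ).toReal ≤ 1 - ε := by
    intro σ hσ hρσ
    rw [Measure.sub_apply MeasurableSet.univ hρσ]
    have h3 : σ Set.univ - ρ Set.univ ≤ 1 - ENNReal.ofReal ε := tsub_le_tsub hσ hε
    have h4 : (1 : ℝ≥0∞) - ENNReal.ofReal ε = ENNReal.ofReal (1 - ε) := by
      rw [ENNReal.ofReal_sub _ hε0, ENNReal.ofReal_one]
    calc (σ Set.univ - ρ Set.univ).toReal
        ≤ ((1 : ℝ≥0∞) - ENNReal.ofReal ε).toReal := by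
          apply ENNReal.toReal_mono _ h3
          rw [h4]
          exact ENNReal.ofReal_ne_top
      _ = 1 - ε := by rw [h4, ENNReal.toReal_ofReal (by linarith)]
  have hbound : ∀ (σ : Measure ℝ) [IsFiniteMeasure σ], (σ Set.univ).toReal ≤ 1 - ε →
      |∫ y, f y ∂σ| ≤ 1 - ε := by
    intro σ _ hσ
    have hb := norm_integral_le_of_norm_le_const (μ := σ) (C := 1)
      (Eventually.of_forall fun y => le_trans (f.norm_coe_le_norm y) hf)
    rw [Real.norm_eq_abs] at hb
    calc |∫ y, f y ∂σ| ≤ 1 * (σ Set.univ).toReal := hb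
      _ = (σ Set.univ).toReal := one_mul _
      _ ≤ 1 - ε := hσ
  calc |(∫ y, f y ∂μ) - ∫ y, f y ∂ν|
      = |(∫ y, f y ∂(μ - ρ)) - ∫ y, f y ∂(ν - ρ)| := by rw [hdμ, hdν]; ring_nf
    _ ≤ |∫ y, f y ∂(μ - ρ)| + |∫ y, f y ∂(ν - ρ)| := abs_sub _ _
    _ ≤ (1 - ε) + (1 - ε) := add_le_add
        (hbound _ (hmass μ hμ hρμ)) (hbound _ (hmass ν hν hρν))
    _ = 2 - 2*ε := by ring

end KantAux

open KantAux in
/-- There are `ε > 0` and `u ∈ (0,1)` such that the lattice minimum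
`(T̂_i'^2δ_x) ∧ (T̂_i'δ_x)` has total mass at least `ε` for all `x ∈ (u,1)`;
consequently `‖T̂_i'^2δ_x − T̂_i'δ_x‖_TV ≤ 2 − 2ε < 2` on the open neighbourhood
`(u,1]` of `1` in `[0,1]`. -/
theorem kantorovich_condition_four (i : ℕ) (hi : 1 ≤ i) :
    ∃ ε > 0, ∃ u ∈ Set.Ioo (0:ℝ) 1,
      (∀ x ∈ Set.Ioo u 1,
        ε ≤ ((((kantTrans i x).bind (kantTrans i)) ⊓ (kantTrans i x)) Set.univ).toReal) ∧
      (∀ x ∈ Set.Ioc u 1,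
        tvDist ((kantTrans i x).bind (kantTrans i)) (kantTrans i x) ≤ 2 - 2*ε) := by
  have hc0 : 0 < kantConst i := kantConst_pos hi
  set κ := min (kantConst i) (kantConst i * kantConst i / 2) with hκdef
  have hκ0 : 0 < κ := lt_min hc0 (by positivity)
  set ε := min (κ/4) (1/2) with hεdef
  have hε0 : 0 < ε := lt_min (by positivity) (by norm_num)
  have hεκ : ε ≤ κ/4 := min_le_left _ _
  have hεh : ε ≤ 1/2 := min_le_right _ _
  refine ⟨ε, hε0, 1/2, ⟨by norm_num, by norm_num⟩, ?_, ?_⟩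
  · intro x hx
    obtain ⟨hx1, hx2⟩ := hx
    obtain ⟨ρ, hρμ, hρν, hρu⟩ := common_minorant hi hx1 hx2
    have hinf : ρ ≤ (kantTrans i x).bind (kantTrans i) ⊓ kantTrans i x := le_inf hρμ hρν
    have h5 : ENNReal.ofReal ε ≤ ((kantTrans i x).bind (kantTrans i) ⊓ kantTrans i x) Set.univ := by
      refine le_trans ?_ (le_trans hρu (Measure.le_iff'.1 hinf Set.univ))
      exact ENNReal.ofReal_le_ofReal (by linarith)
    have h6 : ((kantTrans i x).bind (kantTrans i) ⊓ kantTrans i x) Set.univ ≤ 1 := by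
      refine le_trans (Measure.le_iff'.1 inf_le_right Set.univ) ?_
      exact le_of_eq (mass hi ⟨by linarith, hx2⟩)
    calc ε = (ENNReal.ofReal ε).toReal := (ENNReal.toReal_ofReal hε0.le).symm
      _ ≤ _ := ENNReal.toReal_mono (lt_of_le_of_lt h6 ENNReal.one_lt_top).ne h5
  · intro x hx
    obtain ⟨hx1, hx2⟩ := hx
    rcases eq_or_lt_of_le hx2 with heq | hlt
    · subst heq
      have h1 : kantTrans i (1:ℝ) = Measure.dirac 1 := by simp [kantTrans]
      have hb : (kantTrans i (1:ℝ)).bind (kantTrans i) = kantTrans i (1:ℝ) := by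
        conv_lhs => rw [h1]
        rw [Measure.dirac_bind (measurable_kantTrans hi)]
      rw [hb]
      have hone : kantTrans i (1:ℝ) Set.univ = 1 := by rw [h1]; simp
      haveI : IsFiniteMeasure (kantTrans i (1:ℝ)) := ⟨by rw [hone]; exact ENNReal.one_lt_top⟩
      apply tv_le_of_common _ _ (kantTrans i (1:ℝ)) (le_of_eq hone) (le_of_eq hone)
        le_rfl le_rfl hε0.le (by linarith)
      rw [hone]
      calc ENNReal.ofReal ε ≤ ENNReal.ofReal 1 := ENNReal.ofReal_le_ofReal (by linarith)
        _ = 1 := ENNReal.ofReal_one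
    · obtain ⟨ρ, hρμ, hρν, hρu⟩ := common_minorant hi hx1 hlt
      haveI hν : IsFiniteMeasure (kantTrans i x) :=
        ⟨by rw [mass hi ⟨by linarith, hlt⟩]; exact ENNReal.one_lt_top⟩
      haveI hμ : IsFiniteMeasure ((kantTrans i x).bind (kantTrans i)) :=
        ⟨lt_of_le_of_lt (bind_mass_le hi hx1 hlt) ENNReal.one_lt_top⟩
      apply tv_le_of_common _ _ ρ (bind_mass_le hi hx1 hlt)
        (le_of_eq (mass hi ⟨by linarith, hlt⟩)) hρμ hρν hε0.le (by linarith)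
      exact le_trans (ENNReal.ofReal_le_ofReal (by linarith)) hρu
end
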